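/- arXiv:2202.10831 — 3 statements merged into one kernel-verified Lean document; each statement's English description precedes it below -/
import Mathlib

section
/- Let S be a finite planar point set in general position admitting a plane spanning cycle H such that every triangle spanned by an edge of H together with a third point of S is empty (contains no point of S in its interior). Then S is in convex position. -/
open scoped Classical

noncomputable section

abbrev Pt : Type := ℝ × ℝ

/-- default point -/
def pd : Pt := (0, 0)

/-- No three distinct points of `S` are collinear. -/
def GenPos (S : Finset Pt) : Prop :=
  ∀ p ∈ S, ∀ q ∈ S, ∀ r ∈ S, p ≠ q → p ≠ r → q ≠ r →
    ¬ Collinear ℝ ({p, q, r} : Set Pt)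

/-- The (ordered) edges of a path given as a list of vertices. -/
def pathEdges (l : List Pt) : List (Pt × Pt) := l.zip l.tail

/-- The (ordered) edges of a cycle given as a list of vertices. -/
def cycleEdges (l : List Pt) : List (Pt × Pt) := l.zip (l.rotate 1)

/-- A family of straight-line segments is pairwise non-crossing:
the open segments of any two distinct members are disjoint. -/
def NonCrossing (E : List (Pt × Pt)) : Prop :=
  E.Pairwise fun e f => openSegment ℝ e.1 e.2 ∩ openSegment ℝ f.1 f.2 = ∅

/-- `l` is a plane (crossing-free) straight-line spanning path of `S`. -/
def IsPlanePath (S : Finset Pt) (l : List Pt) : Prop :=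
  l.Nodup ∧ l.toFinset = S ∧ NonCrossing (pathEdges l)

/-- `l` is a plane straight-line spanning cycle of `S`. -/
def IsPlaneCycle (S : Finset Pt) (l : List Pt) : Prop :=
  3 ≤ l.length ∧ l.Nodup ∧ l.toFinset = S ∧ NonCrossing (cycleEdges l)

/-- The set of edges of a path, as unordered pairs. -/
def edgeSet (l : List Pt) : Finset (Sym2 Pt) :=
  ((pathEdges l).map fun e => s(e.1, e.2)).toFinset

/-- The set of edges of a cycle, as unordered pairs. -/
def cycleEdgeSet (l : List Pt) : Finset (Sym2 Pt) :=
  ((cycleEdges l).map fun e => s(e.1, e.2)).toFinset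

/-- No segment joining two points of `S` crosses any edge of the cycle `l`. -/
def UncrossedCycle (S : Finset Pt) (l : List Pt) : Prop :=
  ∀ a ∈ S, ∀ b ∈ S, a ≠ b → ∀ e ∈ cycleEdges l, s(a, b) ≠ s(e.1, e.2) →
    openSegment ℝ a b ∩ openSegment ℝ e.1 e.2 = ∅

/-- Two plane spanning paths of `S` differ by a single flip. -/
def FlipAdj (S : Finset Pt) (P Q : List Pt) : Prop :=
  IsPlanePath S P ∧ IsPlanePath S Q ∧
    ∃ e f, e ≠ f ∧ e ∈ edgeSet P ∧ f ∈ edgeSet Q ∧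
      (edgeSet P).erase e = (edgeSet Q).erase f

/-- There is a sequence of `k` flips from `P` to (a representative of) `Q`, all of whose
members are plane spanning paths of `S` satisfying the additional property `A`. -/
def FlipSeq (S : Finset Pt) (A : List Pt → Prop) (k : ℕ) (P Q : List Pt) : Prop :=
  ∃ f : ℕ → List Pt, f 0 = P ∧ edgeSet (f k) = edgeSet Q ∧
    (∀ i ≤ k, IsPlanePath S (f i) ∧ A (f i)) ∧
    ∀ i < k, FlipAdj S (f i) (f (i + 1))

/-- The flip graph on the plane spanning paths of `S` satisfying `A` is connected. -/
def FlipConnected (S : Finset Pt) (A : List Pt → Prop) : Prop :=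
  ∀ P Q : List Pt, IsPlanePath S P → A P → IsPlanePath S Q → A Q →
    ∃ k, FlipSeq S A k P Q

/-- `uv` is an edge of the boundary of the convex hull of `S`. -/
def HullEdge (S : Finset Pt) (u v : Pt) : Prop :=
  u ∈ S ∧ v ∈ S ∧ u ≠ v ∧ segment ℝ u v ⊆ frontier (convexHull ℝ (S : Set Pt))

/-- `p` is an extreme point (a vertex of the convex hull) of `S`. -/
def ExtremePt (S : Finset Pt) (p : Pt) : Prop :=
  p ∈ S ∧ p ∉ convexHull ℝ ((S.erase p : Finset Pt) : Set Pt)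

/-- `p` is a point of `S` lying strictly in the interior of the convex hull of `S`. -/
def InteriorPt (S : Finset Pt) (p : Pt) : Prop :=
  p ∈ S ∧ p ∈ interior (convexHull ℝ (S : Set Pt))

/-- Twice the signed area of the triangle `a b c` (orientation test). -/
def sign3 (a b c : Pt) : ℝ :=
  (b.1 - a.1) * (c.2 - a.2) - (b.2 - a.2) * (c.1 - a.1)

namespace Stmt12

def crossv (a b : Pt) : ℝ := a.1 * b.2 - a.2 * b.1
def dotv (a b : Pt) : ℝ := a.1 * b.1 + a.2 * b.2
def nrm (a : Pt) : ℝ := Real.sqrt (a.1 ^ 2 + a.2 ^ 2)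

/-- `m` lies in the open convex cone spanned by `a` and `b`. -/
def IC (m a b : Pt) : Prop :=
  ∃ s t : ℝ, 0 < s ∧ 0 < t ∧ m.1 = s * a.1 + t * b.1 ∧ m.2 = s * a.2 + t * b.2


lemma crossv_anticomm (a b : Pt) : crossv a b = - crossv b a := by
  simp [crossv]; ring

lemma ic_symm {m a b : Pt} (h : IC m a b) : IC m b a := by
  obtain ⟨s, t, hs, ht, h1, h2⟩ := h
  exact ⟨t, s, ht, hs, by linarith, by linarith⟩

lemma ne_zero_of_crossv {a b : Pt} (h : crossv a b ≠ 0) : b ≠ 0 := by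
  rintro rfl; simp [crossv] at h

lemma ne_zero_of_crossv' {a b : Pt} (h : crossv a b ≠ 0) : a ≠ 0 := by
  rintro rfl; simp [crossv] at h

lemma ic_of_signs {m a b : Pt} (hab : crossv a b ≠ 0)
    (h1 : 0 < crossv m b * crossv a b) (h2 : 0 < crossv a m * crossv a b) :
    IC m a b := by
  refine ⟨crossv m b / crossv a b, crossv a m / crossv a b, ?_, ?_, ?_, ?_⟩
  · rw [div_pos_iff]
    rcases mul_pos_iff.1 h1 with ⟨x, y⟩ | ⟨x, y⟩
    · exact Or.inl ⟨x, y⟩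
    · exact Or.inr ⟨x, y⟩
  · rw [div_pos_iff]
    rcases mul_pos_iff.1 h2 with ⟨x, y⟩ | ⟨x, y⟩
    · exact Or.inl ⟨x, y⟩
    · exact Or.inr ⟨x, y⟩
  · field_simp
    simp only [crossv]; ring
  · field_simp
    simp only [crossv]; ring

lemma key_identity (a b c m : Pt) :
    crossv m b * crossv a c = crossv a b * crossv m c - crossv a m * crossv b c := by
  simp only [crossv]; ring

lemma core {a b c m : Pt} (hac : 0 < crossv a c) (hmc : 0 < crossv m c)
    (ham : 0 < crossv a m) (hab : crossv a b ≠ 0) (hbc : crossv b c ≠ 0)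
    (hmb0 : crossv m b = 0 → m = -b) :
    IC m a b ∨ IC m b c ∨ IC (-c) a b ∨ IC (-a) b c := by
  have hid := key_identity a b c m
  have hCb : crossv (-c) b = crossv b c := by simp [crossv]; ring
  have haC : crossv a (-c) = - crossv a c := by simp [crossv]; ring
  rcases lt_trichotomy (crossv m b) 0 with hmb | hmb | hmb
  · -- crossv m b < 0
    rcases lt_or_gt_of_ne hbc with hbc' | hbc'
    · rcases lt_or_gt_of_ne hab with hab' | hab'
      · -- D3
        refine Or.inr (Or.inr (Or.inl (ic_of_signs hab ?_ ?_)))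
        · rw [hCb]; exact mul_pos_of_neg_of_neg hbc' hab'
        · rw [haC]; exact mul_pos_of_neg_of_neg (by linarith) hab'
      · exfalso
        have f1 : crossv m b * crossv a c < 0 := mul_neg_of_neg_of_pos hmb hac
        have f2 : 0 < crossv a b * crossv m c := mul_pos hab' hmc
        have f3 : crossv a m * crossv b c < 0 := mul_neg_of_pos_of_neg ham hbc'
        linarith
    · -- D2
      refine Or.inr (Or.inl (ic_of_signs hbc ?_ ?_))
      · exact mul_pos hmc hbc'
      · have : crossv b m = - crossv m b := by rw [crossv_anticomm]
        rw [this]; exact mul_pos (by linarith) hbc'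
  · -- crossv m b = 0
    have hm := hmb0 hmb
    subst hm
    have h1 : crossv a b < 0 := by
      have : crossv a (-b) = - crossv a b := by simp [crossv]; ring
      rw [this] at ham; linarith
    have h2 : crossv b c < 0 := by
      have : crossv (-b) c = - crossv b c := by simp [crossv]; ring
      rw [this] at hmc; linarith
    refine Or.inr (Or.inr (Or.inl (ic_of_signs hab ?_ ?_)))
    · rw [hCb]; exact mul_pos_of_neg_of_neg h2 h1
    · rw [haC]; exact mul_pos_of_neg_of_neg (by linarith) h1
  · -- crossv m b > 0
    rcases lt_or_gt_of_ne hab with hab' | hab'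
    · rcases lt_or_gt_of_ne hbc with hbc' | hbc'
      · -- D3
        refine Or.inr (Or.inr (Or.inl (ic_of_signs hab ?_ ?_)))
        · rw [hCb]; exact mul_pos_of_neg_of_neg hbc' hab'
        · rw [haC]; exact mul_pos_of_neg_of_neg (by linarith) hab'
      · exfalso
        have f1 : 0 < crossv m b * crossv a c := mul_pos hmb hac
        have f2 : crossv a b * crossv m c < 0 := mul_neg_of_neg_of_pos hab' hmc
        have f3 : 0 < crossv a m * crossv b c := mul_pos ham hbc'
        linarith
    · -- D1
      exact Or.inl (ic_of_signs hab (mul_pos hmb hab') (mul_pos ham hab'))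


lemma normsq_pos_of_crossv {m v : Pt} (h : crossv m v ≠ 0) : 0 < v.1 ^ 2 + v.2 ^ 2 := by
  rcases lt_or_ge 0 (v.1 ^ 2 + v.2 ^ 2) with h1 | h1
  · exact h1
  · exfalso
    have hv1 : v.1 = 0 := by nlinarith [sq_nonneg v.1, sq_nonneg v.2]
    have hv2 : v.2 = 0 := by nlinarith [sq_nonneg v.1, sq_nonneg v.2]
    apply h; simp [crossv, hv1, hv2]

lemma normsq_pos_of_crossv' {m v : Pt} (h : crossv m v ≠ 0) : 0 < m.1 ^ 2 + m.2 ^ 2 := by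
  have : crossv v m ≠ 0 := by
    intro h0; apply h; simp only [crossv] at h0 ⊢; linarith
  exact normsq_pos_of_crossv this

lemma nrm_pos_of_crossv {m v : Pt} (h : crossv m v ≠ 0) : 0 < nrm v :=
  Real.sqrt_pos.2 (normsq_pos_of_crossv h)

lemma nrm_sq {v : Pt} : nrm v ^ 2 = v.1 ^ 2 + v.2 ^ 2 :=
  Real.sq_sqrt (by positivity)

lemma coscmp_scalar {M Np Nq cp cq sp sq : ℝ} (hM : 0 < M) (hNp0 : 0 < Np)
    (hNq0 : 0 < Nq) (hp : 0 < sp) (hq : 0 < sq)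
    (pythP : cp ^ 2 + sp ^ 2 = M * Np ^ 2) (pythQ : cq ^ 2 + sq ^ 2 = M * Nq ^ 2)
    (hle : cp * Nq ≤ cq * Np) : sq * cp - cq * sp ≤ 0 := by
  rcases le_or_gt cp 0 with hcp0 | hcp0
  · rcases le_or_gt 0 cq with hcq0 | hcq0
    · nlinarith [mul_nonneg hq.le (neg_nonneg.2 hcp0), mul_nonneg hcq0 hp.le]
    · -- cp ≤ 0, cq < 0
      have hyneg : cq * Np < 0 := mul_neg_of_neg_of_pos hcq0 hNp0
      have hxneg : cp * Nq < 0 := lt_of_le_of_lt hle hyneg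
      have hcplt : cp < 0 := by nlinarith
      have h2 : (cq * Np) ^ 2 ≤ (cp * Nq) ^ 2 := by nlinarith
      have e1 : sq ^ 2 = M * Nq ^ 2 - cq ^ 2 := by linarith
      have e2 : sp ^ 2 = M * Np ^ 2 - cp ^ 2 := by linarith
      have key : (sq * cp) ^ 2 - (cq * sp) ^ 2
          = M * ((cp * Nq) ^ 2 - (cq * Np) ^ 2) := by
        linear_combination cp ^ 2 * e1 - cq ^ 2 * e2
      have h5 : (cq * sp) ^ 2 ≤ (sq * cp) ^ 2 := by
        have := mul_nonneg hM.le (sub_nonneg.2 h2)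
        linarith
      have hx : sq * cp < 0 := mul_neg_of_pos_of_neg hq hcplt
      have hy : cq * sp < 0 := mul_neg_of_neg_of_pos hcq0 hp
      nlinarith [h5, hx, hy]
  · -- 0 < cp, hence 0 < cq
    have hxpos : 0 < cp * Nq := mul_pos hcp0 hNq0
    have hypos : 0 < cq * Np := lt_of_lt_of_le hxpos hle
    have hcq0 : 0 < cq := by nlinarith
    have h2 : (cp * Nq) ^ 2 ≤ (cq * Np) ^ 2 := by nlinarith
    have e1 : sq ^ 2 = M * Nq ^ 2 - cq ^ 2 := by linarith
    have e2 : sp ^ 2 = M * Np ^ 2 - cp ^ 2 := by linarith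
    have key : (cq * sp) ^ 2 - (sq * cp) ^ 2
        = M * ((cq * Np) ^ 2 - (cp * Nq) ^ 2) := by
      linear_combination cq ^ 2 * e2 - cp ^ 2 * e1
    have h5 : (sq * cp) ^ 2 ≤ (cq * sp) ^ 2 := by
      have := mul_nonneg hM.le (sub_nonneg.2 h2)
      linarith
    have hx : 0 < sq * cp := mul_pos hq hcp0
    have hy : 0 < cq * sp := mul_pos hcq0 hp
    nlinarith [h5, hx, hy]

/-- If `pv` and `qv` are both strictly on the positive side of `m` and the normalized
projection of `pv` on `m` is at most that of `qv`, then `qv` is angularly not beyond `pv`. -/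
lemma coscmp {m pv qv : Pt} (hp : 0 < crossv m pv) (hq : 0 < crossv m qv)
    (hle : dotv m pv * nrm qv ≤ dotv m qv * nrm pv) : crossv pv qv ≤ 0 := by
  have hM : 0 < m.1 ^ 2 + m.2 ^ 2 := normsq_pos_of_crossv' hp.ne'
  have hNp0 : 0 < nrm pv := nrm_pos_of_crossv hp.ne'
  have hNq0 : 0 < nrm qv := nrm_pos_of_crossv hq.ne'
  have pythP : dotv m pv ^ 2 + crossv m pv ^ 2 = (m.1 ^ 2 + m.2 ^ 2) * nrm pv ^ 2 := by
    rw [nrm_sq]; simp only [dotv, crossv]; ring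
  have pythQ : dotv m qv ^ 2 + crossv m qv ^ 2 = (m.1 ^ 2 + m.2 ^ 2) * nrm qv ^ 2 := by
    rw [nrm_sq]; simp only [dotv, crossv]; ring
  have hmain := coscmp_scalar hM hNp0 hNq0 hp hq pythP pythQ hle
  have hident : crossv pv qv * (m.1 ^ 2 + m.2 ^ 2)
      = crossv m qv * dotv m pv - dotv m qv * crossv m pv := by
    simp only [dotv, crossv]; ring
  nlinarith [hident, hM, hmain]

/-- Mirrored version of `coscmp`. -/
lemma coscmp' {m pv qv : Pt} (hp : crossv m pv < 0) (hq : crossv m qv < 0)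
    (hle : dotv m pv * nrm qv ≤ dotv m qv * nrm pv) : crossv qv pv ≤ 0 := by
  have h := coscmp (m := (m.2, m.1)) (pv := (pv.2, pv.1)) (qv := (qv.2, qv.1))
    (by simp only [crossv] at hp ⊢; linarith)
    (by simp only [crossv] at hq ⊢; linarith)
    (by
      have e1 : dotv ((m.2, m.1) : Pt) ((pv.2, pv.1) : Pt) = dotv m pv := by
        simp only [dotv]; ring
      have e2 : dotv ((m.2, m.1) : Pt) ((qv.2, qv.1) : Pt) = dotv m qv := by
        simp only [dotv]; ring
      have e3 : nrm ((pv.2, pv.1) : Pt) = nrm pv := by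
        simp only [nrm]; rw [add_comm]
      have e4 : nrm ((qv.2, qv.1) : Pt) = nrm qv := by
        simp only [nrm]; rw [add_comm]
      rw [e1, e2, e3, e4]; exact hle)
  simp only [crossv] at h ⊢
  linarith


lemma normsq_pos_of_ne {d : Pt} (hd : d ≠ 0) : 0 < d.1 ^ 2 + d.2 ^ 2 := by
  rcases eq_or_ne d.1 0 with h1 | h1
  · have h2 : d.2 ≠ 0 := by
      intro h2; apply hd; exact Prod.ext h1 h2
    positivity
  · positivity

lemma crossv_eq_zero_of_dots {d v1 v2 : Pt} (hd : d ≠ 0) (h1 : dotv v1 d = 0)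
    (h2 : dotv v2 d = 0) : crossv v1 v2 = 0 := by
  have hM : 0 < d.1 ^ 2 + d.2 ^ 2 := normsq_pos_of_ne hd
  have hident : crossv v1 v2 * (d.1 ^ 2 + d.2 ^ 2)
      = dotv v1 d * crossv d v2 + dotv v2 d * crossv v1 d := by
    simp only [crossv, dotv]; ring
  rw [h1, h2] at hident
  simp only [zero_mul, add_zero] at hident
  exact (mul_eq_zero.1 hident).resolve_right (by positivity)

lemma collinear_of_crossv_eq_zero {p x y : Pt} (h : crossv (x - p) (y - p) = 0) :
    Collinear ℝ ({p, x, y} : Set Pt) := by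
  by_cases hxp : x = p
  · have hset : ({p, x, y} : Set Pt) = {p, y} := by
      rw [hxp]; exact Set.insert_idem _ _
    rw [hset]
    exact collinear_pair ℝ p y
  · have hv : x - p ≠ 0 := sub_ne_zero.2 hxp
    rw [collinear_iff_of_mem (Set.mem_insert p {x, y})]
    refine ⟨x - p, fun q hq => ?_⟩
    have hcomp : (x - p).1 ≠ 0 ∨ (x - p).2 ≠ 0 := by
      by_contra hc
      push_neg at hc
      exact hv (Prod.ext hc.1 hc.2)
    simp only [Prod.fst_sub, Prod.snd_sub] at hcomp
    simp only [crossv, Prod.fst_sub, Prod.snd_sub] at h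
    rcases hq with h' | h' | h'
    · exact ⟨0, by rw [h']; simp⟩
    · refine ⟨1, by rw [h']; simp⟩
    · rw [h']
      rcases hcomp with h1 | h1
      · refine ⟨(y.1 - p.1) / (x.1 - p.1), ?_⟩
        have e2 : y.2 - p.2 = (y.1 - p.1) / (x.1 - p.1) * (x.2 - p.2) := by
          field_simp
          linarith
        apply Prod.ext
        · simp only [vadd_eq_add, Prod.fst_add, Prod.smul_fst, smul_eq_mul, Prod.fst_sub]
          field_simp
          ring
        · simp only [vadd_eq_add, Prod.snd_add, Prod.smul_snd, smul_eq_mul, Prod.snd_sub]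
          linarith [e2]
      · refine ⟨(y.2 - p.2) / (x.2 - p.2), ?_⟩
        have e2 : y.1 - p.1 = (y.2 - p.2) / (x.2 - p.2) * (x.1 - p.1) := by
          field_simp
          linarith
        apply Prod.ext
        · simp only [vadd_eq_add, Prod.fst_add, Prod.smul_fst, smul_eq_mul, Prod.fst_sub]
          linarith [e2]
        · simp only [vadd_eq_add, Prod.snd_add, Prod.smul_snd, smul_eq_mul, Prod.snd_sub]
          field_simp
          ring

lemma crossv_eq_zero_of_collinear {z u v : Pt} (h : Collinear ℝ ({z, u, v} : Set Pt)) :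
    crossv (u - z) (v - z) = 0 := by
  rw [collinear_iff_of_mem (Set.mem_insert z {u, v})] at h
  obtain ⟨w, hw⟩ := h
  obtain ⟨r1, hr1⟩ := hw u (by simp)
  obtain ⟨r2, hr2⟩ := hw v (by simp)
  rw [hr1, hr2]
  simp only [crossv, vadd_eq_add, Prod.fst_sub, Prod.snd_sub, Prod.fst_add, Prod.snd_add,
    Prod.smul_fst, Prod.smul_snd, smul_eq_mul]
  ring


lemma finrank_Pt : Module.finrank ℝ Pt = 2 := by
  simp [Module.finrank_prod]

/-- positive combination characterization of triangle interior membership -/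
lemma mem_interior_triangle {u v z p : Pt} {s t : ℝ} (hs : 0 < s) (ht : 0 < t)
    (h1 : z.1 - p.1 = -(s * (u.1 - p.1)) - t * (v.1 - p.1))
    (h2 : z.2 - p.2 = -(s * (u.2 - p.2)) - t * (v.2 - p.2))
    (hcr : crossv (u - p) (v - p) ≠ 0) :
    p ∈ interior (convexHull ℝ ({u, v, z} : Set Pt)) := by
  have hst : (0:ℝ) < 1 + s + t := by linarith
  -- affine independence
  have hcr2 : crossv (u - z) (v - z) = (1 + s + t) * crossv (u - p) (v - p) := by
    have hz1 : z.1 = p.1 - s * (u.1 - p.1) - t * (v.1 - p.1) := by linarith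
    have hz2 : z.2 = p.2 - s * (u.2 - p.2) - t * (v.2 - p.2) := by linarith
    simp only [crossv, Prod.fst_sub, Prod.snd_sub]
    rw [hz1, hz2]; ring
  have hncol : ¬ Collinear ℝ ({u, v, z} : Set Pt) := by
    intro hcol
    have hcol' : Collinear ℝ ({z, u, v} : Set Pt) := by
      have : ({z, u, v} : Set Pt) = {u, v, z} := by
        ext q; simp only [Set.mem_insert_iff, Set.mem_singleton_iff]; tauto
      rw [this]; exact hcol
    have := crossv_eq_zero_of_collinear hcol'
    rw [hcr2] at this
    exact hcr ((mul_eq_zero.1 this).resolve_left (by linarith))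
  have hind : AffineIndependent ℝ ![u, v, z] :=
    affineIndependent_iff_not_collinear_set.2 hncol
  have htot : affineSpan ℝ (Set.range ![u, v, z]) = ⊤ := by
    rw [hind.affineSpan_eq_top_iff_card_eq_finrank_add_one]
    simp [finrank_Pt]
  let b : AffineBasis (Fin 3) ℝ Pt := ⟨![u, v, z], hind, htot⟩
  have hbcoe : ⇑b = ![u, v, z] := rfl
  -- weights
  set W : Fin 3 → ℝ := ![s / (1 + s + t), t / (1 + s + t), 1 / (1 + s + t)] with hW
  have hWsum : ∑ i : Fin 3, W i = 1 := by
    simp only [hW, Fin.sum_univ_three]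
    simp only [Matrix.cons_val_zero, Matrix.cons_val_one, Matrix.head_cons,
      Matrix.cons_val_two, Matrix.tail_cons]
    field_simp
    ring
  have hcomb : Finset.univ.affineCombination ℝ ![u, v, z] W = p := by
    rw [Finset.affineCombination_eq_linear_combination _ _ _ hWsum]
    simp only [Fin.sum_univ_three, hW]
    simp only [Matrix.cons_val_zero, Matrix.cons_val_one, Matrix.head_cons,
      Matrix.cons_val_two, Matrix.tail_cons]
    apply Prod.ext
    · simp only [Prod.fst_add, Prod.smul_fst, smul_eq_mul]
      field_simp
      linarith
    · simp only [Prod.snd_add, Prod.smul_snd, smul_eq_mul]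
      field_simp
      linarith
  have hrange : Set.range ⇑b = ({u, v, z} : Set Pt) := by
    rw [hbcoe]
    ext q
    simp only [Matrix.range_cons, Matrix.range_empty, Set.union_empty, Set.union_singleton,
      Set.mem_insert_iff, Set.mem_singleton_iff, Set.mem_union]
    tauto
  rw [← hrange, b.interior_convexHull]
  refine Set.mem_setOf_eq ▸ fun i => ?_
  have hcoord : b.coord i p = W i := by
    rw [← hcomb]
    have : Finset.univ.affineCombination ℝ ![u, v, z] W
        = Finset.univ.affineCombination ℝ ⇑b W := by rw [hbcoe]
    rw [this]
    exact b.coord_apply_combination_of_mem (Finset.mem_univ i) hWsum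
  rw [hcoord]
  fin_cases i <;> simp [hW] <;> positivity


lemma zip_rotate_one {α β : Type*} (l : List α) (l' : List β) (h : l.length = l'.length) :
    (l.rotate 1).zip (l'.rotate 1) = (l.zip l').rotate 1 := by
  cases l with
  | nil =>
    have : l' = [] := List.eq_nil_of_length_eq_zero h.symm
    subst this; simp
  | cons a s =>
    cases l' with
    | nil => simp at h
    | cons b s' =>
      have hlen : s.length = s'.length := by simpa using h
      rw [show (a :: s).rotate 1 = s ++ [a] by
            rw [show (1:ℕ) = 0 + 1 from rfl, List.rotate_cons_succ, List.rotate_zero],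
          show (b :: s').rotate 1 = s' ++ [b] by
            rw [show (1:ℕ) = 0 + 1 from rfl, List.rotate_cons_succ, List.rotate_zero],
          List.zip_cons_cons,
          show ((a, b) :: s.zip s').rotate 1 = s.zip s' ++ [(a, b)] by
            rw [show (1:ℕ) = 0 + 1 from rfl, List.rotate_cons_succ, List.rotate_zero]]
      exact List.zip_append hlen

lemma zip_rotate {α β : Type*} (l : List α) (l' : List β) (h : l.length = l'.length) (n : ℕ) :
    (l.rotate n).zip (l'.rotate n) = (l.zip l').rotate n := by
  induction n with
  | zero => simp
  | succ n ih =>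
    have h1 : l.rotate (n + 1) = (l.rotate n).rotate 1 := by
      rw [List.rotate_rotate]
    have h2 : l'.rotate (n + 1) = (l'.rotate n).rotate 1 := by
      rw [List.rotate_rotate]
    rw [h1, h2, zip_rotate_one _ _ (by simp [h]), ih, List.rotate_rotate]

lemma mem_cycleEdges_rotate {l : List Pt} {e : Pt × Pt} {n : ℕ}
    (h : e ∈ cycleEdges (l.rotate n)) : e ∈ cycleEdges l := by
  unfold cycleEdges at *
  have h1 : (l.rotate n).rotate 1 = (l.rotate 1).rotate n := by
    rw [List.rotate_rotate, List.rotate_rotate, Nat.add_comm]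
  rw [h1, zip_rotate _ _ (by simp) n, List.mem_rotate] at h
  exact h

lemma mem_zip_append {α β : Type*} {l : List α} {l₂ k : List β} {e : α × β}
    (h : e ∈ l.zip l₂) : e ∈ l.zip (l₂ ++ k) := by
  induction l generalizing l₂ with
  | nil => simp at h
  | cons a s ih =>
    cases l₂ with
    | nil => simp [List.zip] at h
    | cons b s' =>
      rw [List.cons_append, List.zip_cons_cons] at *
      rcases List.mem_cons.1 h with h' | h'
      · exact List.mem_cons.2 (Or.inl h')
      · exact List.mem_cons.2 (Or.inr (ih h'))

lemma mem_zip_tail_split {α : Type*} {l : List α} {u v : α}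
    (h : (u, v) ∈ l.zip l.tail) : ∃ s s', l = s ++ u :: v :: s' := by
  induction l with
  | nil => simp at h
  | cons a s ih =>
    cases s with
    | nil => simp [List.zip] at h
    | cons b s' =>
      simp only [List.tail_cons, List.zip_cons_cons, List.mem_cons] at h
      rcases h with h' | h'
      · rw [Prod.ext_iff] at h'
        obtain ⟨h1, h2⟩ := h'
        simp only at h1 h2
        exact ⟨[], s', by rw [h1, h2]; rfl⟩
      · have h'' : (u, v) ∈ (b :: s').zip (b :: s').tail := by
          simpa using h'
        obtain ⟨s1, s2, hs⟩ := ih h''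
        exact ⟨a :: s1, s2, by rw [hs]; rfl⟩


section Chain

variable {α : Type*} {G : α → α → Prop} {P : α → Prop}

lemma chain_reach
    (htrans : ∀ x y z, P x → P y → P z → x ≠ y → y ≠ z → x ≠ z → G x y → G y z → G x z) :
    ∀ (l : List α) (a : α), (a :: l).Nodup → (∀ x ∈ a :: l, P x) →
      (∀ u v : α, (u, v) ∈ (a :: l).zip (a :: l).tail → G u v) → ∀ y ∈ l, G a y := by
  intro l
  induction l with
  | nil => intro a _ _ _ y hy; simp at hy
  | cons b s ih =>
    intro a hnd hP hcons y hy
    have hGab : G a b := hcons a b (by simp [List.zip_cons_cons])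
    rcases List.mem_cons.1 hy with rfl | hy'
    · exact hGab
    · have hnd' : (b :: s).Nodup := hnd.of_cons
      have hP' : ∀ x ∈ b :: s, P x := fun x hx => hP x (List.mem_cons_of_mem a hx)
      have hcons' : ∀ u v : α, (u, v) ∈ (b :: s).zip (b :: s).tail → G u v := by
        intro u v huv
        apply hcons
        simp only [List.tail_cons, List.zip_cons_cons, List.mem_cons]
        right; simpa using huv
      have hGby : G b y := ih b hnd' hP' hcons' y hy'
      have hab : a ≠ b := by
        intro hh; subst hh
        exact (List.nodup_cons.1 hnd).1 List.mem_cons_self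
      have hay : a ≠ y := by
        intro hh; subst hh
        exact (List.nodup_cons.1 hnd).1 (List.mem_cons_of_mem b hy')
      have hby : b ≠ y := by
        intro hh; subst hh
        exact (List.nodup_cons.1 hnd').1 hy'
      exact htrans a b y (hP a (by simp)) (hP b (by simp)) (hP y (by simp [hy]))
        hab hby hay hGab hGby

lemma chain_all
    (hsym : ∀ x y, P x → P y → G x y → G y x)
    (htrans : ∀ x y z, P x → P y → P z → x ≠ y → y ≠ z → x ≠ z → G x y → G y z → G x z) :
    ∀ (l : List α), l.Nodup → (∀ x ∈ l, P x) →
      (∀ u v : α, (u, v) ∈ l.zip l.tail → G u v) →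
      ∀ x ∈ l, ∀ y ∈ l, x ≠ y → G x y := by
  intro l
  induction l with
  | nil => intro _ _ _ x hx; simp at hx
  | cons a s ih =>
    intro hnd hP hcons x hx y hy hxy
    have hnd' : s.Nodup := hnd.of_cons
    have hP' : ∀ z ∈ s, P z := fun z hz => hP z (List.mem_cons_of_mem a hz)
    have hcons' : ∀ u v : α, (u, v) ∈ s.zip s.tail → G u v := by
      intro u v huv
      apply hcons
      cases s with
      | nil => simp at huv
      | cons b s' =>
        simp only [List.tail_cons, List.zip_cons_cons, List.mem_cons]
        right; simpa using huv
    rcases List.mem_cons.1 hx with rfl | hx'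
    · rcases List.mem_cons.1 hy with rfl | hy'
      · exact absurd rfl hxy
      · exact chain_reach htrans s x hnd hP hcons y hy'
    · rcases List.mem_cons.1 hy with rfl | hy'
      · exact hsym y x (hP y (by simp)) (hP x (by simp [hx']))
          (chain_reach htrans s y hnd hP hcons x hx')
      · exact ih hnd' hP' hcons' x hx' y hy' hxy

end Chain

lemma posSpan {S : Finset Pt} {p : Pt}
    (hcross : ∀ x ∈ S, ∀ y ∈ S, x ≠ p → y ≠ p → x ≠ y → crossv (x - p) (y - p) ≠ 0)
    (hp : p ∈ convexHull ℝ ((S.erase p : Finset Pt) : Set Pt)) :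
    ∀ d : Pt, d ≠ 0 → ∃ x ∈ S, x ≠ p ∧ 0 < dotv (x - p) d := by
  intro d hd
  by_contra hcon
  push_neg at hcon
  rw [Finset.convexHull_eq] at hp
  obtain ⟨w, hw0, hw1, hwc⟩ := hp
  rw [Finset.centerMass_eq_of_sum_1 _ _ hw1] at hwc
  simp only [id] at hwc
  set E := S.erase p with hE
  have hc1 : ∑ y ∈ E, w y * y.1 = p.1 := by
    have := congrArg Prod.fst hwc
    rw [Prod.fst_sum] at this
    simpa [Prod.smul_fst] using this
  have hc2 : ∑ y ∈ E, w y * y.2 = p.2 := by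
    have := congrArg Prod.snd hwc
    rw [Prod.snd_sum] at this
    simpa [Prod.smul_snd] using this
  have hsum : ∑ y ∈ E, w y * dotv (y - p) d = 0 := by
    have expand : ∀ y, w y * dotv (y - p) d
        = (w y * y.1) * d.1 + (w y * y.2) * d.2 - w y * (p.1 * d.1 + p.2 * d.2) := by
      intro y; simp only [dotv, Prod.fst_sub, Prod.snd_sub]; ring
    rw [Finset.sum_congr rfl (fun y _ => expand y)]
    rw [Finset.sum_sub_distrib, Finset.sum_add_distrib, ← Finset.sum_mul, ← Finset.sum_mul,
      ← Finset.sum_mul, hc1, hc2, hw1]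
    ring
  have hterm : ∀ y ∈ E, w y * dotv (y - p) d ≤ 0 := by
    intro y hy
    obtain ⟨hyne, hyS⟩ := Finset.mem_erase.1 hy
    exact mul_nonpos_of_nonneg_of_nonpos (hw0 y hy) (hcon y hyS hyne)
  have hzero : ∀ y ∈ E, w y * dotv (y - p) d = 0 := by
    have hnn : ∀ y ∈ E, 0 ≤ -(w y * dotv (y - p) d) := fun y hy => by
      have := hterm y hy; linarith
    have hs0 : ∑ y ∈ E, -(w y * dotv (y - p) d) = 0 := by
      rw [Finset.sum_neg_distrib, hsum]; ring
    intro y hy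
    have := (Finset.sum_eq_zero_iff_of_nonneg hnn).1 hs0 y hy
    linarith
  obtain ⟨y₁, hy₁E, hwy₁⟩ := Finset.exists_ne_zero_of_sum_ne_zero (by rw [hw1]; norm_num :
    ∑ y ∈ E, w y ≠ 0)
  obtain ⟨hy₁ne, hy₁S⟩ := Finset.mem_erase.1 hy₁E
  have hwy₁pos : 0 < w y₁ := lt_of_le_of_ne (hw0 y₁ hy₁E) (Ne.symm hwy₁)
  have hdot₁ : dotv (y₁ - p) d = 0 := by
    have := hzero y₁ hy₁E
    rcases mul_eq_zero.1 this with h' | h'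
    · exact absurd h' hwy₁
    · exact h'
  by_cases hex : ∃ y₂ ∈ E, y₂ ≠ y₁ ∧ w y₂ ≠ 0
  · obtain ⟨y₂, hy₂E, hy₂ne₁, hwy₂⟩ := hex
    obtain ⟨hy₂ne, hy₂S⟩ := Finset.mem_erase.1 hy₂E
    have hdot₂ : dotv (y₂ - p) d = 0 := by
      have := hzero y₂ hy₂E
      rcases mul_eq_zero.1 this with h' | h'
      · exact absurd h' hwy₂
      · exact h'
    exact hcross y₁ hy₁S y₂ hy₂S hy₁ne hy₂ne (Ne.symm hy₂ne₁)
      (crossv_eq_zero_of_dots hd hdot₁ hdot₂)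
  · push_neg at hex
    have hw1' : w y₁ = 1 := by
      rw [← hw1, Finset.sum_eq_single y₁ (fun y hy hne => hex y hy hne) (fun h => absurd hy₁E h)]
    have hp1 : p = y₁ := by
      rw [← hwc, Finset.sum_eq_single y₁ (fun y hy hne => by rw [hex y hy hne, zero_smul])
        (fun h => absurd hy₁E h), hw1', one_smul]
    exact hy₁ne hp1.symm

end Stmt12

/-- If a point set `S` in general position has a plane spanning cycle such that
every triangle spanned by a cycle edge and a third point of `S` is empty,
then `S` is in convex position. -/
theorem stmt_12 (S : Finset Pt) (hgp : GenPos S) (h : List Pt)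
    (hcyc : IsPlaneCycle S h)
    (hempty : ∀ e ∈ cycleEdges h, ∀ x ∈ S, x ≠ e.1 → x ≠ e.2 →
      ∀ y ∈ S, y ∉ interior (convexHull ℝ ({e.1, e.2, x} : Set Pt))) :
    ∀ p ∈ S, ExtremePt S p := by
  intro p hpS
  refine ⟨hpS, fun hp => ?_⟩
  obtain ⟨hlen3, hnd, htofin, -⟩ := hcyc
  have hmemS : ∀ x : Pt, x ∈ S ↔ x ∈ h := fun x => by rw [← htofin, List.mem_toFinset]
  have hph : p ∈ h := (hmemS p).1 hpS
  -- general position: nonzero cross products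
  have hcross : ∀ x ∈ S, ∀ y ∈ S, x ≠ p → y ≠ p → x ≠ y →
      Stmt12.crossv (x - p) (y - p) ≠ 0 := by
    intro x hx y hy hxp hyp hxy hc
    exact hgp p hpS x hx y hy (Ne.symm hxp) (Ne.symm hyp) hxy
      (Stmt12.collinear_of_crossv_eq_zero hc)
  have hspan := Stmt12.posSpan hcross hp
  -- cut the cycle at p
  obtain ⟨l₁, l₂, hcut⟩ := List.append_of_mem hph
  set t : List Pt := l₂ ++ l₁ with htdef
  have hndh : (l₁ ++ p :: l₂).Nodup := by rw [← hcut]; exact hnd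
  obtain ⟨h1nd, h2nd, hdisj⟩ := List.nodup_append.1 hndh
  have hpl₂ : p ∉ l₂ := (List.nodup_cons.1 h2nd).1
  have hpl₁ : p ∉ l₁ := fun hmem => hdisj p hmem p List.mem_cons_self rfl
  have htmem : ∀ x : Pt, x ∈ t ↔ x ∈ S ∧ x ≠ p := by
    intro x
    constructor
    · intro hx
      rcases List.mem_append.1 hx with hx' | hx'
      · have hin : x ∈ h := by
          rw [hcut]
          exact List.mem_append.2 (Or.inr (List.mem_cons_of_mem p hx'))
        exact ⟨(hmemS x).2 hin, fun hh => hpl₂ (hh ▸ hx')⟩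
      · have hin : x ∈ h := by
          rw [hcut]
          exact List.mem_append.2 (Or.inl hx')
        exact ⟨(hmemS x).2 hin, fun hh => hpl₁ (hh ▸ hx')⟩
    · rintro ⟨hxS, hxp⟩
      have := (hmemS x).1 hxS
      rw [hcut] at this
      rcases List.mem_append.1 this with hx' | hx'
      · exact List.mem_append.2 (Or.inr hx')
      · rcases List.mem_cons.1 hx' with hh | hh
        · exact absurd hh hxp
        · exact List.mem_append.2 (Or.inl hh)
  have htnd : t.Nodup :=
    (List.nodup_cons.1 h2nd).2.append h1nd
      (fun a ha₂ ha₁ => hdisj a ha₁ a (List.mem_cons_of_mem p ha₂) rfl)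
  -- consecutive pairs of t are cycle edges of h
  have hrot : h.rotate l₁.length = p :: t := by
    rw [hcut, List.rotate_eq_drop_append_take (by simp : l₁.length ≤ (l₁ ++ p :: l₂).length),
      List.drop_left, List.take_left]
    rfl
  have hedge : ∀ u v : Pt, (u, v) ∈ t.zip t.tail → (u, v) ∈ cycleEdges h := by
    intro u v huv
    apply Stmt12.mem_cycleEdges_rotate (n := l₁.length)
    rw [hrot]
    unfold cycleEdges
    have hr1 : (p :: t).rotate 1 = t ++ [p] := by
      rw [show (1:ℕ) = 0 + 1 from rfl, List.rotate_cons_succ, List.rotate_zero]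
    rw [hr1]
    cases ht : t with
    | nil => rw [ht] at huv; simp at huv
    | cons c t' =>
      rw [ht] at huv
      simp only [List.tail_cons] at huv
      rw [List.cons_append, List.zip_cons_cons]
      exact List.mem_cons.2 (Or.inr (Stmt12.mem_zip_append huv))
  -- the Good relation
  have hconsec : ∀ u v : Pt, (u, v) ∈ t.zip t.tail →
      ∀ z ∈ S, z ≠ p → ¬ Stmt12.IC (p - z) (u - p) (v - p) := by
    intro u v huv z hzS hzp hIC
    obtain ⟨s1, t1, hs1, ht1, he1, he2⟩ := hIC
    simp only [Prod.fst_sub, Prod.snd_sub] at he1 he2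
    obtain ⟨hut, hvt'⟩ := List.of_mem_zip huv
    have hvt : v ∈ t := List.mem_of_mem_tail hvt'
    obtain ⟨huS, hup⟩ := (htmem u).1 hut
    obtain ⟨hvS, hvp⟩ := (htmem v).1 hvt
    have huvne : u ≠ v := by
      obtain ⟨s2, s3, hsplit⟩ := Stmt12.mem_zip_tail_split huv
      have hnd2 : (u :: v :: s3).Nodup := by
        have := htnd; rw [hsplit] at this; exact this.of_append_right
      intro hh
      exact (List.nodup_cons.1 hnd2).1 (hh ▸ @List.mem_cons_self _ v s3)
    have hcruv : Stmt12.crossv (u - p) (v - p) ≠ 0 := hcross u huS v hvS hup hvp huvne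
    have hzu : z ≠ u := by
      rintro rfl
      apply hcruv
      have hq : (1 + s1) * Stmt12.crossv (z - p) (v - p) = 0 := by
        simp only [Stmt12.crossv, Prod.fst_sub, Prod.snd_sub]
        linear_combination (-(v.2 - p.2)) * he1 + (v.1 - p.1) * he2
      rcases mul_eq_zero.1 hq with hq' | hq'
      · linarith
      · exact hq'
    have hzv : z ≠ v := by
      rintro rfl
      apply hcruv
      have hq : (1 + t1) * Stmt12.crossv (u - p) (z - p) = 0 := by
        simp only [Stmt12.crossv, Prod.fst_sub, Prod.snd_sub]
        linear_combination (u.2 - p.2) * he1 - (u.1 - p.1) * he2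
      rcases mul_eq_zero.1 hq with hq' | hq'
      · linarith
      · exact hq'
    have hint : p ∈ interior (convexHull ℝ ({u, v, z} : Set Pt)) :=
      Stmt12.mem_interior_triangle hs1 ht1 (by linarith) (by linarith) hcruv
    exact hempty (u, v) (hedge u v huv) z hzS hzu hzv p hpS hint
  -- symmetry and transitivity of Good
  have hsym : ∀ x y : Pt, (x ∈ S ∧ x ≠ p) → (y ∈ S ∧ y ≠ p) →
      (∀ z ∈ S, z ≠ p → ¬ Stmt12.IC (p - z) (x - p) (y - p)) →
      (∀ z ∈ S, z ≠ p → ¬ Stmt12.IC (p - z) (y - p) (x - p)) :=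
    fun x y _ _ hG z hzS hzp hIC => hG z hzS hzp (Stmt12.ic_symm hIC)
  have htrans : ∀ x y w : Pt, (x ∈ S ∧ x ≠ p) → (y ∈ S ∧ y ≠ p) → (w ∈ S ∧ w ≠ p) →
      x ≠ y → y ≠ w → x ≠ w →
      (∀ z ∈ S, z ≠ p → ¬ Stmt12.IC (p - z) (x - p) (y - p)) →
      (∀ z ∈ S, z ≠ p → ¬ Stmt12.IC (p - z) (y - p) (w - p)) →
      (∀ z ∈ S, z ≠ p → ¬ Stmt12.IC (p - z) (x - p) (w - p)) := by
    rintro x y w ⟨hxS, hxp⟩ ⟨hyS, hyp⟩ ⟨hwS, hwp⟩ hxy hyw hxw hGxy hGyw z₀ hz₀S hz₀p hIC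
    obtain ⟨s1, t1, hs1, ht1, he1, he2⟩ := hIC
    simp only [Prod.fst_sub, Prod.snd_sub] at he1 he2
    have hac : Stmt12.crossv (x - p) (w - p) ≠ 0 := hcross x hxS w hwS hxp hwp hxw
    have hmc : Stmt12.crossv (p - z₀) (w - p) = s1 * Stmt12.crossv (x - p) (w - p) := by
      simp only [Stmt12.crossv, Prod.fst_sub, Prod.snd_sub]
      linear_combination (w.2 - p.2) * he1 - (w.1 - p.1) * he2
    have ham : Stmt12.crossv (x - p) (p - z₀) = t1 * Stmt12.crossv (x - p) (w - p) := by
      simp only [Stmt12.crossv, Prod.fst_sub, Prod.snd_sub]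
      linear_combination (x.1 - p.1) * he2 - (x.2 - p.2) * he1
    have hmb0 : Stmt12.crossv (p - z₀) (y - p) = 0 → (p - z₀) = -(y - p) := by
      intro h0
      by_cases hz₀y : z₀ = y
      · rw [hz₀y, neg_sub]
      · exfalso
        apply hcross z₀ hz₀S y hyS hz₀p hyp hz₀y
        simp only [Stmt12.crossv, Prod.fst_sub, Prod.snd_sub] at h0 ⊢
        linarith
    rcases lt_or_gt_of_ne hac with hacneg | hacpos
    · -- swap the roles of x and w
      have hac' : 0 < Stmt12.crossv (w - p) (x - p) := by
        rw [Stmt12.crossv_anticomm]; linarith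
      have hmc' : 0 < Stmt12.crossv (p - z₀) (x - p) := by
        have : Stmt12.crossv (p - z₀) (x - p) = t1 * Stmt12.crossv (w - p) (x - p) := by
          rw [Stmt12.crossv_anticomm (x - p) (p - z₀)] at ham
          rw [Stmt12.crossv_anticomm (w - p) (x - p)]
          linarith
        rw [this]; exact mul_pos ht1 hac'
      have ham' : 0 < Stmt12.crossv (w - p) (p - z₀) := by
        have : Stmt12.crossv (w - p) (p - z₀) = s1 * Stmt12.crossv (w - p) (x - p) := by
          rw [Stmt12.crossv_anticomm (p - z₀) (w - p)] at hmc
          rw [Stmt12.crossv_anticomm (w - p) (x - p)]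
          linarith
        rw [this]; exact mul_pos hs1 hac'
      rcases Stmt12.core hac' hmc' ham' (hcross w hwS y hyS hwp hyp (Ne.symm hyw))
          (hcross y hyS x hxS hyp hxp (Ne.symm hxy)) hmb0 with hD | hD | hD | hD
      · exact hGyw z₀ hz₀S hz₀p (Stmt12.ic_symm hD)
      · exact hGxy z₀ hz₀S hz₀p (Stmt12.ic_symm hD)
      · exact hGyw x hxS hxp (Stmt12.ic_symm (by rwa [neg_sub] at hD))
      · exact hGxy w hwS hwp (Stmt12.ic_symm (by rwa [neg_sub] at hD))
    · have hmcpos : 0 < Stmt12.crossv (p - z₀) (w - p) := by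
        rw [hmc]; exact mul_pos hs1 hacpos
      have hampos : 0 < Stmt12.crossv (x - p) (p - z₀) := by
        rw [ham]; exact mul_pos ht1 hacpos
      rcases Stmt12.core hacpos hmcpos hampos (hcross x hxS y hyS hxp hyp hxy)
          (hcross y hyS w hwS hyp hwp hyw) hmb0 with hD | hD | hD | hD
      · exact hGxy z₀ hz₀S hz₀p hD
      · exact hGyw z₀ hz₀S hz₀p hD
      · exact hGxy w hwS hwp (by rwa [neg_sub] at hD)
      · exact hGyw x hxS hxp (by rwa [neg_sub] at hD)
  have hP : ∀ x ∈ t, (x ∈ S ∧ x ≠ p) := fun x hx => (htmem x).1 hx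
  have hGood := Stmt12.chain_all (G := fun x y => ∀ z ∈ S, z ≠ p →
      ¬ Stmt12.IC (p - z) (x - p) (y - p)) (P := fun x => x ∈ S ∧ x ≠ p)
    hsym htrans t htnd hP hconsec
  -- now derive the contradiction
  have hcard : 3 ≤ S.card := by
    rw [← htofin, List.toFinset_card_of_nodup hnd]; exact hlen3
  have hEne : (S.erase p).Nonempty := by
    rw [← Finset.card_pos, Finset.card_erase_of_mem hpS]; omega
  obtain ⟨a, haE⟩ := hEne
  obtain ⟨hap, haS⟩ := Finset.mem_erase.1 haE
  set m : Pt := p - a with hmdef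
  have hm0 : m ≠ 0 := by
    rw [hmdef, sub_ne_zero]
    exact fun hh => hap hh.symm
  have hm1 : ((-m.2, m.1) : Pt) ≠ 0 := by
    intro h0
    rw [Prod.ext_iff] at h0
    simp only [Prod.fst_zero, Prod.snd_zero, neg_eq_zero] at h0
    exact hm0 (Prod.ext h0.2 h0.1)
  have hm2 : ((m.2, -m.1) : Pt) ≠ 0 := by
    intro h0
    rw [Prod.ext_iff] at h0
    simp only [Prod.fst_zero, Prod.snd_zero, neg_eq_zero] at h0
    exact hm0 (Prod.ext h0.2 h0.1)
  -- upper and lower half-planes are nonempty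
  obtain ⟨x₀, hx₀S, hx₀p, hx₀⟩ := hspan (-m.2, m.1) hm1
  have hx₀' : 0 < Stmt12.crossv m (x₀ - p) := by
    have : Stmt12.dotv (x₀ - p) (-m.2, m.1) = Stmt12.crossv m (x₀ - p) := by
      simp only [Stmt12.dotv, Stmt12.crossv]; ring
    linarith [this ▸ hx₀]
  obtain ⟨x₁, hx₁S, hx₁p, hx₁⟩ := hspan (m.2, -m.1) hm2
  have hx₁' : Stmt12.crossv m (x₁ - p) < 0 := by
    have : Stmt12.dotv (x₁ - p) (m.2, -m.1) = -Stmt12.crossv m (x₁ - p) := by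
      simp only [Stmt12.dotv, Stmt12.crossv]; ring
    linarith [this ▸ hx₁]
  set upperF : Finset Pt := (S.erase p).filter (fun x => 0 < Stmt12.crossv m (x - p))
    with hupdef
  set lowerF : Finset Pt := (S.erase p).filter (fun x => Stmt12.crossv m (x - p) < 0)
    with hlodef
  have hupne : upperF.Nonempty :=
    ⟨x₀, Finset.mem_filter.2 ⟨Finset.mem_erase.2 ⟨hx₀p, hx₀S⟩, hx₀'⟩⟩
  have hlone : lowerF.Nonempty :=
    ⟨x₁, Finset.mem_filter.2 ⟨Finset.mem_erase.2 ⟨hx₁p, hx₁S⟩, hx₁'⟩⟩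
  obtain ⟨u, huF, humax⟩ := Finset.exists_max_image upperF
    (fun x => Stmt12.dotv m (x - p) / Stmt12.nrm (x - p)) hupne
  obtain ⟨v, hvF, hvmax⟩ := Finset.exists_max_image lowerF
    (fun x => Stmt12.dotv m (x - p) / Stmt12.nrm (x - p)) hlone
  obtain ⟨huE, hucr⟩ := Finset.mem_filter.1 huF
  obtain ⟨hvE, hvcr⟩ := Finset.mem_filter.1 hvF
  obtain ⟨hup, huS⟩ := Finset.mem_erase.1 huE
  obtain ⟨hvp, hvS⟩ := Finset.mem_erase.1 hvE
  have huvne : u ≠ v := fun hh => by rw [hh] at hucr; linarith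
  have hcruv : Stmt12.crossv (u - p) (v - p) ≠ 0 := hcross u huS v hvS hup hvp huvne
  rcases lt_or_gt_of_ne hcruv with hneg | hpos
  · -- m lies strictly inside the cone of u-p and v-p : contradiction with Good u v
    have hIC : Stmt12.IC m (u - p) (v - p) := by
      apply Stmt12.ic_of_signs hcruv
      · exact mul_pos_of_neg_of_neg hvcr hneg
      · have : Stmt12.crossv (u - p) m = -Stmt12.crossv m (u - p) :=
          Stmt12.crossv_anticomm _ _
        rw [this]
        exact mul_pos_of_neg_of_neg (by linarith) hneg
    exact hGood u ((htmem u).2 ⟨huS, hup⟩) v ((htmem v).2 ⟨hvS, hvp⟩) huvne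
      a haS hap hIC
  · -- all points are weakly clockwise of u : contradiction with spanning
    have hall : ∀ x ∈ S, x ≠ p → Stmt12.crossv (x - p) (u - p) ≤ 0 := by
      intro x hxS hxp
      rcases lt_trichotomy (Stmt12.crossv m (x - p)) 0 with hx | hx | hx
      · -- x in the lower half-plane
        have hxF : x ∈ lowerF := Finset.mem_filter.2 ⟨Finset.mem_erase.2 ⟨hxp, hxS⟩, hx⟩
        have hle' : Stmt12.dotv m (x - p) * Stmt12.nrm (v - p)
            ≤ Stmt12.dotv m (v - p) * Stmt12.nrm (x - p) :=
          (div_le_div_iff₀ (Stmt12.nrm_pos_of_crossv hx.ne)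
            (Stmt12.nrm_pos_of_crossv hvcr.ne)).1 (hvmax x hxF)
        have hcvx : Stmt12.crossv (v - p) (x - p) ≤ 0 := Stmt12.coscmp' hx hvcr hle'
        by_contra hxu
        push_neg at hxu
        have hident := Stmt12.key_identity (u - p) (x - p) (v - p) m
        have ha1 : Stmt12.crossv m (x - p) * Stmt12.crossv (u - p) (v - p) < 0 :=
          mul_neg_of_neg_of_pos hx hpos
        have ha2 : 0 < Stmt12.crossv (u - p) (x - p) * Stmt12.crossv m (v - p) := by
          apply mul_pos_of_neg_of_neg _ hvcr
          rw [Stmt12.crossv_anticomm]; linarith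
        have ha4 : Stmt12.crossv (u - p) m * Stmt12.crossv (x - p) (v - p) > 0 := by
          linarith
        have ha5 : Stmt12.crossv (u - p) m < 0 := by
          rw [Stmt12.crossv_anticomm]; linarith
        have hB : 0 ≤ Stmt12.crossv (x - p) (v - p) := by
          rw [Stmt12.crossv_anticomm]; linarith
        nlinarith [ha4, ha5, hB]
      · -- x must be a itself
        have hxa : x = a := by
          by_contra hxane
          apply hcross x hxS a haS hxp hap hxane
          simp only [hmdef, Stmt12.crossv, Prod.fst_sub, Prod.snd_sub] at hx ⊢
          linarith
        rw [hxa]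
        have : Stmt12.crossv (a - p) (u - p) = -Stmt12.crossv m (u - p) := by
          simp only [hmdef, Stmt12.crossv, Prod.fst_sub, Prod.snd_sub]; ring
        rw [this]; linarith
      · -- x in the upper half-plane
        have hxF : x ∈ upperF := Finset.mem_filter.2 ⟨Finset.mem_erase.2 ⟨hxp, hxS⟩, hx⟩
        have hle' : Stmt12.dotv m (x - p) * Stmt12.nrm (u - p)
            ≤ Stmt12.dotv m (u - p) * Stmt12.nrm (x - p) :=
          (div_le_div_iff₀ (Stmt12.nrm_pos_of_crossv hx.ne')
            (Stmt12.nrm_pos_of_crossv hucr.ne')).1 (humax x hxF)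
        exact Stmt12.coscmp hx hucr hle'
    have hu0 : ((( u - p).2, -((u - p).1)) : Pt) ≠ 0 := by
      intro h0
      rw [Prod.ext_iff] at h0
      simp only [Prod.fst_zero, Prod.snd_zero, neg_eq_zero] at h0
      have : u - p = 0 := Prod.ext h0.2 h0.1
      rw [sub_eq_zero] at this
      exact hup this
    obtain ⟨x₂, hx₂S, hx₂p, hx₂⟩ := hspan ((u - p).2, -((u - p).1)) hu0
    have : Stmt12.dotv (x₂ - p) ((u - p).2, -((u - p).1)) = Stmt12.crossv (x₂ - p) (u - p) := by
      simp only [Stmt12.dotv, Stmt12.crossv]; ring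
    rw [this] at hx₂
    linarith [hall x₂ hx₂S hx₂p]
end
end

section
/- Let S be a wheel set: n ≥ 4 points in general position with exactly one point c0 strictly inside the convex hull. Let P = v1,...,vn be a plane spanning path on S with v1 ≠ c0 and v2 = c0. Then v3 is a neighbor of v1 along the convex hull boundary (i.e., v1v3 is a convex hull edge), and flipping the edge v2v3 to the edge v1v3 yields a plane spanning path with one more convex-hull edge than P. -/
open scoped Classical

noncomputable section

/-- `S` is a wheel set with center `c0`: points in general position, exactly one
point (`c0`) strictly inside the convex hull, all other points extreme. -/
def WheelSet (S : Finset Pt) (c0 : Pt) : Prop :=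
  GenPos S ∧ 4 ≤ S.card ∧ InteriorPt S c0 ∧ ∀ x ∈ S, x ≠ c0 → ExtremePt S x

/-- The number of convex-hull edges of `S` used by the path `l`. -/
def hullCount (S : Finset Pt) (l : List Pt) : ℕ :=
  ((edgeSet l).filter fun e => ∃ u v, e = s(u, v) ∧ HullEdge S u v).card

-- ===== auxiliary lemmas =====

lemma comb1 (s t : ℝ) (p q : Pt) : (s•p + t•q).1 = s*p.1 + t*q.1 := rfl
lemma comb2 (s t : ℝ) (p q : Pt) : (s•p + t•q).2 = s*p.2 + t*q.2 := rfl

lemma collinear_of_sign3 {p q r : Pt} (h : sign3 p q r = 0) :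
    Collinear ℝ ({p, q, r} : Set Pt) := by
  rcases eq_or_ne p q with rfl | hpq
  · have : ({p, p, r} : Set Pt) = {p, r} := by simp
    rw [this]; exact collinear_pair ℝ p r
  · rw [collinear_iff_of_mem (Set.mem_insert p ({q, r} : Set Pt))]
    refine ⟨q - p, ?_⟩
    intro x hx
    simp only [Set.mem_insert_iff, Set.mem_singleton_iff] at hx
    rcases hx with rfl | rfl | rfl
    · exact ⟨0, by simp⟩
    · exact ⟨1, by simp⟩
    · have hne : q.1 - p.1 ≠ 0 ∨ q.2 - p.2 ≠ 0 := by
        by_contra hc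
        push_neg at hc
        apply hpq
        have h1 : p.1 = q.1 := by have := hc.1; linarith
        have h2 : p.2 = q.2 := by have := hc.2; linarith
        exact Prod.ext h1 h2
      simp only [sign3] at h
      rcases hne with h1 | h2
      · refine ⟨(x.1 - p.1)/(q.1 - p.1), ?_⟩
        have e1 : (x.1 - p.1)/(q.1 - p.1) * (q.1 - p.1) + p.1 = x.1 := by field_simp; ring
        have e2 : (x.1 - p.1)/(q.1 - p.1) * (q.2 - p.2) + p.2 = x.2 := by
          field_simp; nlinarith [h]
        refine Prod.ext ?_ ?_ <;> simp [Prod.fst_sub, Prod.snd_sub]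
        · linarith [e1]
        · linarith [e2]
      · refine ⟨(x.2 - p.2)/(q.2 - p.2), ?_⟩
        have e1 : (x.2 - p.2)/(q.2 - p.2) * (q.1 - p.1) + p.1 = x.1 := by
          field_simp; nlinarith [h]
        have e2 : (x.2 - p.2)/(q.2 - p.2) * (q.2 - p.2) + p.2 = x.2 := by field_simp; ring
        refine Prod.ext ?_ ?_ <;> simp [Prod.fst_sub, Prod.snd_sub]
        · linarith [e1]
        · linarith [e2]

lemma pt1_add (p q : Pt) : (p + q).1 = p.1 + q.1 := rfl
lemma pt2_add (p q : Pt) : (p + q).2 = p.2 + q.2 := rfl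
lemma pt1_sub (p q : Pt) : (p - q).1 = p.1 - q.1 := rfl
lemma pt2_sub (p q : Pt) : (p - q).2 = p.2 - q.2 := rfl
lemma pt1_smul (t : ℝ) (p : Pt) : (t • p).1 = t * p.1 := rfl
lemma pt2_smul (t : ℝ) (p : Pt) : (t • p).2 = t * p.2 := rfl

lemma interior_pos {S : Finset Pt} (f : Pt → ℝ)
    (haff : ∀ p q : Pt, ∀ θ : ℝ, f ((1-θ)•p + θ•q) = (1-θ) * f p + θ * f q)
    {u v : Pt} (huv : f u < f v)
    (hs : ∀ p ∈ S, 0 ≤ f p) {x : Pt}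
    (hx : x ∈ interior (convexHull ℝ (S : Set Pt))) : 0 < f x := by
  have hconv : Convex ℝ {p : Pt | 0 ≤ f p} := by
    intro p hp q hq sa sb hsa hsb hab
    have hsa' : sa = 1 - sb := by linarith
    subst hsa'
    simp only [Set.mem_setOf_eq] at *
    rw [haff p q sb]
    nlinarith
  have hsub : convexHull ℝ (S : Set Pt) ⊆ {p : Pt | 0 ≤ f p} :=
    convexHull_min (fun p hp => hs p hp) hconv
  have hx2 : x ∈ interior {p : Pt | 0 ≤ f p} := interior_mono hsub hx
  by_contra hle
  push_neg at hle
  have hxmem : x ∈ {p : Pt | 0 ≤ f p} := interior_subset hx2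
  have hfx : f x = 0 := le_antisymm hle hxmem
  obtain ⟨ε, hε, hball⟩ := Metric.mem_nhds_iff.1 (mem_interior_iff_mem_nhds.1 hx2)
  have huvne : u ≠ v := fun h => by rw [h] at huv; exact lt_irrefl _ huv
  have hnorm : 0 < ‖u - v‖ := by
    rw [norm_sub_pos_iff]; exact fun h => huvne h
  set s : ℝ := ε / (2 * ‖u - v‖) with hs_def
  have hspos : 0 < s := by positivity
  set y : Pt := x + s • (u - v) with hy_def
  have hkey : f (x + (u - v)) = f x + f u - f v := by
    have hm : (1-(1/2 : ℝ)) • (x + (u-v)) + (1/2 : ℝ) • v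
        = (1-(1/2 : ℝ)) • x + (1/2 : ℝ) • u := by
      refine Prod.ext ?_ ?_
      · simp only [comb1, pt1_add, pt1_sub, pt1_smul]; ring
      · simp only [comb2, pt2_add, pt2_sub, pt2_smul]; ring
    have h1 := haff (x + (u-v)) v (1/2)
    have h2 := haff x u (1/2)
    rw [hm, h2] at h1
    linarith
  have hyval : f y = f x + s * (f u - f v) := by
    have hyc : y = (1-s) • x + s • (x + (u-v)) := by
      refine Prod.ext ?_ ?_
      · simp only [hy_def, comb1, pt1_add, pt1_sub, pt1_smul]; ring
      · simp only [hy_def, comb2, pt2_add, pt2_sub, pt2_smul]; ring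
    rw [hyc, haff, hkey]; ring
  have hyball : y ∈ Metric.ball x ε := by
    simp only [Metric.mem_ball, hy_def]
    have hd : dist (x + s • (u - v)) x = s * ‖u - v‖ := by
      rw [dist_eq_norm]
      simp only [add_sub_cancel_left]
      rw [norm_smul, Real.norm_eq_abs, abs_of_pos hspos]
    rw [hd, hs_def]
    rw [div_mul_eq_mul_div, div_lt_iff₀ (by positivity)]
    nlinarith
  have hy2 := hball hyball
  simp only [Set.mem_setOf_eq] at hy2
  nlinarith

lemma extreme_not_interior {S : Finset Pt} {x : Pt}
    (hxS : x ∈ S) (hx : x ∉ convexHull ℝ ((S.erase x : Finset Pt) : Set Pt))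
    (hne : (S.erase x).Nonempty) : x ∉ interior (convexHull ℝ (S : Set Pt)) := by
  intro hint
  obtain ⟨w, hw⟩ := hne
  have hwx : w ≠ x := (Finset.mem_erase.1 hw).1
  have hwh : w ∈ convexHull ℝ ((S.erase x : Finset Pt) : Set Pt) :=
    subset_convexHull ℝ _ (by exact_mod_cast hw)
  obtain ⟨ε, hε, hball⟩ := Metric.mem_nhds_iff.1 (mem_interior_iff_mem_nhds.1 hint)
  have hnorm : 0 < ‖x - w‖ := by
    rw [norm_sub_pos_iff]; exact fun h => hwx h.symm
  set δ : ℝ := ε / (2 * ‖x - w‖) with hδ_def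
  have hδpos : 0 < δ := by positivity
  set y : Pt := x + δ • (x - w) with hy_def
  have hyball : y ∈ Metric.ball x ε := by
    simp only [Metric.mem_ball, hy_def]
    have hd : dist (x + δ • (x - w)) x = δ * ‖x - w‖ := by
      rw [dist_eq_norm]; simp only [add_sub_cancel_left]
      rw [norm_smul, Real.norm_eq_abs, abs_of_pos hδpos]
    rw [hd, hδ_def, div_mul_eq_mul_div, div_lt_iff₀ (by positivity)]
    nlinarith
  have hyh : y ∈ convexHull ℝ (S : Set Pt) := hball hyball
  have hSeq : (S : Set Pt) = insert x ((S.erase x : Finset Pt) : Set Pt) := by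
    rw [Finset.coe_erase]
    rw [Set.insert_diff_singleton, Set.insert_eq_self.2 (by exact_mod_cast hxS)]
  rw [hSeq, convexHull_insert ⟨w, by exact_mod_cast hw⟩, mem_convexJoin] at hyh
  obtain ⟨x', hx', z, hz, hyz⟩ := hyh
  rw [Set.mem_singleton_iff] at hx'
  rw [hx'] at hyz
  obtain ⟨α, β, hα, hβ, hαβ, hyeq⟩ := hyz
  have hβpos : 0 < β := by
    rcases lt_or_eq_of_le hβ with h | h
    · exact h
    · exfalso
      have hα1 : α = 1 := by linarith
      rw [← h, hα1] at hyeq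
      simp only [one_smul, zero_smul, add_zero] at hyeq
      have h2 : x = x + δ • (x - w) := by rw [← hy_def]; exact hyeq
      have h0 : δ • (x - w) = 0 := (left_eq_add).1 h2
      rcases smul_eq_zero.1 h0 with h' | h'
      · exact absurd h' (ne_of_gt hδpos)
      · rw [sub_eq_zero] at h'; exact hwx h'.symm
  have hsum : 0 < β + δ := by linarith
  rw [show α = 1 - β by linarith] at hyeq
  have e1 : (1-β) * x.1 + β * z.1 = x.1 + δ * (x.1 - w.1) := by
    have h' := congrArg Prod.fst hyeq
    simpa only [hy_def, comb1, pt1_add, pt1_sub, pt1_smul] using h'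
  have e2 : (1-β) * x.2 + β * z.2 = x.2 + δ * (x.2 - w.2) := by
    have h' := congrArg Prod.snd hyeq
    simpa only [hy_def, comb2, pt2_add, pt2_sub, pt2_smul] using h'
  have hxcomb : x = (β/(β+δ)) • z + (δ/(β+δ)) • w := by
    refine Prod.ext ?_ ?_
    · simp only [comb1]; field_simp; nlinarith [e1]
    · simp only [comb2]; field_simp; nlinarith [e2]
  have hxin : x ∈ convexHull ℝ ((S.erase x : Finset Pt) : Set Pt) := by
    have hmem := (convex_convexHull ℝ ((S.erase x : Finset Pt) : Set Pt)) hz hwh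
      (show (0:ℝ) ≤ β/(β+δ) by positivity) (show (0:ℝ) ≤ δ/(β+δ) by positivity)
      (show β/(β+δ) + δ/(β+δ) = 1 by rw [← add_div, div_self (ne_of_gt hsum)])
    rw [← hxcomb] at hmem
    exact hmem
  exact hx hxin

lemma beyond_not_mem {S : Finset Pt} {x y : Pt}
    (hx : x ∈ interior (convexHull ℝ (S : Set Pt)))
    (hyni : y ∉ interior (convexHull ℝ (S : Set Pt))) {s : ℝ} (hs : 1 < s) :
    x + s • (y - x) ∉ convexHull ℝ (S : Set Pt) := by
  intro hz
  have hs0 : (0:ℝ) < s := by linarith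
  have hcomb : (1 - 1/s) • x + (1/s) • (x + s • (y - x)) = y := by
    refine Prod.ext ?_ ?_
    · simp only [comb1, pt1_add, pt1_sub, pt1_smul]; field_simp; ring
    · simp only [comb2, pt2_add, pt2_sub, pt2_smul]; field_simp; ring
  have hmem := (convex_convexHull ℝ (S : Set Pt)).combo_interior_self_mem_interior
    (a := 1 - 1/s) (b := 1/s) hx hz
    (by rw [sub_pos, div_lt_one hs0]; exact hs) (by positivity) (by ring)
  rw [hcomb] at hmem
  exact hyni hmem

lemma seg_cross_aux {a0 a1 b0 b1 : ℝ} (ha0 : 0 < a0) (hb0 : 0 < b0) (ha1 : a1 ≤ 0) :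
    ∃ t : ℝ, 0 ≤ t ∧ t ≤ 1 ∧
      (((1-t)*a0 + t*a1 = 0 ∧ 0 ≤ (1-t)*b0 + t*b1) ∨
       ((1-t)*b0 + t*b1 = 0 ∧ 0 ≤ (1-t)*a0 + t*a1)) := by
  have hd : 0 < a0 - a1 := by linarith
  set t0 : ℝ := a0 / (a0 - a1) with ht0_def
  have ht00 : 0 < t0 := by positivity
  have ht01 : t0 ≤ 1 := by rw [ht0_def, div_le_one hd]; linarith
  have hA0 : (1-t0)*a0 + t0*a1 = 0 := by rw [ht0_def]; field_simp; ring
  by_cases hB : 0 ≤ (1-t0)*b0 + t0*b1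
  · exact ⟨t0, le_of_lt ht00, ht01, Or.inl ⟨hA0, hB⟩⟩
  · push_neg at hB
    have hb1b0 : 0 < b0 - b1 := by nlinarith
    set t1 : ℝ := b0 / (b0 - b1) with ht1_def
    have ht10 : 0 < t1 := by positivity
    have ht1t0 : t1 ≤ t0 := by
      rw [ht1_def, div_le_iff₀ hb1b0]; nlinarith
    refine ⟨t1, le_of_lt ht10, le_trans ht1t0 ht01,
      Or.inr ⟨by rw [ht1_def]; field_simp; ring, ?_⟩⟩
    nlinarith

lemma seg_cross {a0 a1 b0 b1 : ℝ} (ha0 : 0 < a0) (hb0 : 0 < b0)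
    (h1 : a1 ≤ 0 ∨ b1 ≤ 0) :
    ∃ t : ℝ, 0 ≤ t ∧ t ≤ 1 ∧
      (((1-t)*a0 + t*a1 = 0 ∧ 0 ≤ (1-t)*b0 + t*b1) ∨
       ((1-t)*b0 + t*b1 = 0 ∧ 0 ≤ (1-t)*a0 + t*a1)) := by
  rcases h1 with h | h
  · exact seg_cross_aux ha0 hb0 h
  · obtain ⟨t, h0, h1', hor⟩ := seg_cross_aux hb0 ha0 h
    exact ⟨t, h0, h1', hor.symm⟩


lemma pathEdges_cons₂ (x y : Pt) (l : List Pt) :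
    pathEdges (x::y::l) = (x,y) :: pathEdges (y::l) := rfl

lemma pathEdges_subset (x : Pt) (l : List Pt) :
    ∀ e ∈ pathEdges l, e ∈ pathEdges (x::l) := by
  cases l with
  | nil => intro e he; simp [pathEdges] at he
  | cons y ys => intro e he; rw [pathEdges_cons₂]; exact List.mem_cons_of_mem _ he

lemma pathEdges_mem {l : List Pt} {e : Pt × Pt} (he : e ∈ pathEdges l) :
    e.1 ∈ l ∧ e.2 ∈ l.tail := by
  obtain ⟨e1, e2⟩ := e
  exact List.of_mem_zip he

lemma chain'_of_pathEdges {R : Pt → Pt → Prop} :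
    ∀ l : List Pt, (∀ e ∈ pathEdges l, R e.1 e.2) → l.Chain' R := by
  intro l
  induction l with
  | nil => intro _; exact List.isChain_nil
  | cons x xs ih =>
    intro h
    cases xs with
    | nil => exact List.isChain_singleton _
    | cons y ys =>
      simp only [List.Chain', List.isChain_cons_cons]
      refine ⟨h (x,y) (by rw [pathEdges_cons₂]; exact List.mem_cons_self), ?_⟩
      exact ih (fun e he => h e (pathEdges_subset x _ e he))

lemma chain'_head {Q : Pt → Prop} :
    ∀ (l : List Pt) (a : Pt), (a::l).Chain' (fun p q => (Q p ↔ Q q)) →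
      ∀ z ∈ a::l, (Q a ↔ Q z) := by
  intro l
  induction l with
  | nil => intro a _ z hz; simp at hz; subst hz; rfl
  | cons b bs ih =>
    intro a h z hz
    simp only [List.Chain', List.isChain_cons_cons] at h
    rcases List.mem_cons.1 hz with rfl | hz'
    · rfl
    · exact h.1.trans (ih b h.2 z hz')

lemma chain'_all {Q : Pt → Prop} {l : List Pt}
    (h : l.Chain' (fun p q => (Q p ↔ Q q))) :
    ∀ x ∈ l, ∀ y ∈ l, (Q x ↔ Q y) := by
  cases l with
  | nil => simp
  | cons a as =>
    intro x hx y hy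
    exact (chain'_head as a h x hx).symm.trans (chain'_head as a h y hy)


set_option maxHeartbeats 2000000 in
/-- In a wheel set, if a plane spanning path starts `v₁, c₀, v₃, …` with
`v₁ ≠ c₀`, then `v₁v₃` is a convex hull edge and flipping `c₀v₃` to `v₁v₃`
yields a plane spanning path with one more hull edge. -/
theorem stmt_13 (S : Finset Pt) (c0 : Pt) (hW : WheelSet S c0)
    (P : List Pt) (hP : IsPlanePath S P)
    (h1 : P.getD 0 pd ≠ c0) (h2 : P.getD 1 pd = c0) :
    HullEdge S (P.getD 0 pd) (P.getD 2 pd) ∧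
    ∃ Q : List Pt, IsPlanePath S Q ∧
      edgeSet Q = insert s(P.getD 0 pd, P.getD 2 pd)
        ((edgeSet P).erase s(P.getD 1 pd, P.getD 2 pd)) ∧
      hullCount S Q = hullCount S P + 1 := by
  obtain ⟨hGP, hcard, hc0int, hext⟩ := hW
  obtain ⟨hnd0, hSP, hNC⟩ := hP
  have hlen : P.length = S.card := by
    rw [← hSP]; exact (List.toFinset_card_of_nodup hnd0).symm
  rcases P with _ | ⟨a, P1⟩
  · exfalso; simp at hlen; omega
  rcases P1 with _ | ⟨b, P2⟩
  · exfalso; simp at hlen; omega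
  rcases P2 with _ | ⟨c, t⟩
  · exfalso; simp at hlen; omega
  have hbc0 : c0 = b := by symm; simpa using h2
  subst hbc0
  have hac0 : a ≠ c0 := by simpa using h1
  simp only [List.getD_cons_zero, List.getD_cons_succ] at h1 h2 ⊢
  -- distinctness from Nodup
  have hnd := hnd0
  simp only [List.nodup_cons, List.mem_cons, not_or] at hnd
  obtain ⟨⟨hac0', hac, hat⟩, ⟨hc0c, hc0t⟩, hct, hndt⟩ := hnd
  -- memberships
  have haS : a ∈ S := by rw [← hSP]; simp
  have hc0S : c0 ∈ S := by rw [← hSP]; simp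
  have hcS : c ∈ S := by rw [← hSP]; simp
  have htS : ∀ p ∈ t, p ∈ S := by intro p hp; rw [← hSP]; simp [hp]
  have hmemS : ∀ p ∈ S, p = a ∨ p = c0 ∨ p = c ∨ p ∈ t := by
    intro p hp; rw [← hSP] at hp; simpa using hp
  -- general position in sign3 form
  have hs3 : ∀ p q r : Pt, p ∈ S → q ∈ S → r ∈ S → p ≠ q → p ≠ r → q ≠ r →
      sign3 p q r ≠ 0 := by
    intro p q r hp hq hr h1' h2' h3' h0
    exact hGP p hp q hq r hr h1' h2' h3' (collinear_of_sign3 h0)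
  set det : ℝ := sign3 c0 a c with hdet_def
  have hdet : det ≠ 0 := hs3 c0 a c hc0S haS hcS (Ne.symm hac0) (fun h => hc0c h) hac
  set A : Pt → ℝ := fun p => sign3 c0 p c / det with hA_def
  set B : Pt → ℝ := fun p => sign3 c0 a p / det with hB_def
  -- values
  have hAa : A a = 1 := by simp only [hA_def]; exact div_self hdet
  have hBa : B a = 0 := by
    simp only [hB_def]
    rw [show sign3 c0 a a = 0 by simp only [sign3]; ring, zero_div]
  have hAc : A c = 0 := by
    simp only [hA_def]
    rw [show sign3 c0 c c = 0 by simp only [sign3]; ring, zero_div]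
  have hBc : B c = 1 := by simp only [hB_def]; exact div_self hdet
  have hAc0 : A c0 = 0 := by
    simp only [hA_def]
    rw [show sign3 c0 c0 c = 0 by simp only [sign3]; ring, zero_div]
  have hBc0 : B c0 = 0 := by
    simp only [hB_def]
    rw [show sign3 c0 a c0 = 0 by simp only [sign3]; ring, zero_div]
  -- reconstruction
  have hre1 : ∀ p : Pt, p.1 = c0.1 + A p * (a.1 - c0.1) + B p * (c.1 - c0.1) := by
    intro p; simp only [hA_def, hB_def]; field_simp [hdet]
    rw [hdet_def]; simp only [sign3]; ring
  have hre2 : ∀ p : Pt, p.2 = c0.2 + A p * (a.2 - c0.2) + B p * (c.2 - c0.2) := by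
    intro p; simp only [hA_def, hB_def]; field_simp [hdet]
    rw [hdet_def]; simp only [sign3]; ring
  -- affineness
  have hAaff : ∀ p q : Pt, ∀ θ : ℝ, A ((1-θ)•p + θ•q) = (1-θ) * A p + θ * A q := by
    intro p q θ
    simp only [hA_def, sign3, comb1, comb2]
    field_simp
    ring
  have hBaff : ∀ p q : Pt, ∀ θ : ℝ, B ((1-θ)•p + θ•q) = (1-θ) * B p + θ * B q := by
    intro p q θ
    simp only [hB_def, sign3, comb1, comb2]
    field_simp
    ring
  have hsac : ∀ p : Pt, sign3 a c p = (1 - A p - B p) * det := by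
    intro p; simp only [hA_def, hB_def]; field_simp [hdet]
    rw [hdet_def]; simp only [sign3]; ring
  -- nondegeneracy at path points
  have hAB : ∀ p ∈ t, A p ≠ 0 ∧ B p ≠ 0 ∧ A p + B p ≠ 1 := by
    intro p hp
    have hpS := htS p hp
    have hpa : p ≠ a := fun h => hat (h ▸ hp)
    have hpc0 : p ≠ c0 := fun h => hc0t (h ▸ hp)
    have hpc : p ≠ c := fun h => hct (h ▸ hp)
    refine ⟨?_, ?_, ?_⟩
    · exact div_ne_zero (hs3 c0 p c hc0S hpS hcS (Ne.symm hpc0) (fun h => hc0c h) hpc) hdet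
    · exact div_ne_zero (hs3 c0 a p hc0S haS hpS (Ne.symm hac0) (Ne.symm hpc0) (Ne.symm hpa)) hdet
    · intro h
      have h0 : sign3 a c p = 0 := by
        rw [hsac p, show (1 : ℝ) - A p - B p = 0 by linarith, zero_mul]
      exact hs3 a c p haS hcS hpS hac (Ne.symm hpa) (Ne.symm hpc) h0
  -- hull facts
  have hc0i : c0 ∈ interior (convexHull ℝ (S : Set Pt)) := hc0int.2
  have hullmem : ∀ p ∈ S, p ∈ convexHull ℝ (S : Set Pt) := fun p hp =>
    subset_convexHull ℝ _ (by exact_mod_cast hp)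
  have hnotint : ∀ p ∈ S, p ≠ c0 → p ∉ interior (convexHull ℝ (S : Set Pt)) := by
    intro p hp hpc0
    refine extreme_not_interior hp (hext p hp hpc0).2 ?_
    rw [← Finset.card_pos, Finset.card_erase_of_mem hp]
    omega
  have hseghull : ∀ p q : Pt, p ∈ S → q ∈ S →
      segment ℝ p q ⊆ convexHull ℝ (S : Set Pt) :=
    fun p q hp hq => (convex_convexHull ℝ _).segment_subset (hullmem p hp) (hullmem q hq)
  -- noncrossing decomposition
  have hNC' : List.Pairwise
      (fun e f : Pt × Pt => openSegment ℝ e.1 e.2 ∩ openSegment ℝ f.1 f.2 = ∅)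
      ((a, c0) :: (c0, c) :: pathEdges (c :: t)) := hNC
  obtain ⟨hNC1, hNC23⟩ := List.pairwise_cons.1 hNC'
  obtain ⟨hNC2, hNCr⟩ := List.pairwise_cons.1 hNC23
  -- ray avoidance for edges within t
  have hray : ∀ e ∈ pathEdges t, ∀ z ∈ segment ℝ e.1 e.2,
      ¬(B z = 0 ∧ 0 ≤ A z) ∧ ¬(A z = 0 ∧ 0 ≤ B z) := by
    rintro ⟨p, q⟩ he z hz
    obtain ⟨hpt, hqt'⟩ := pathEdges_mem he
    have hqt : q ∈ t := List.mem_of_mem_tail hqt'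
    have hpS := htS p hpt
    have hqS := htS q hqt
    have hpa : p ≠ a := fun h => hat (h ▸ hpt)
    have hpc0 : p ≠ c0 := fun h => hc0t (h ▸ hpt)
    have hpc : p ≠ c := fun h => hct (h ▸ hpt)
    have hqa : q ≠ a := fun h => hat (h ▸ hqt)
    have hqc0 : q ≠ c0 := fun h => hc0t (h ▸ hqt)
    have hqc : q ≠ c := fun h => hct (h ▸ hqt)
    have hABp := hAB p hpt
    have hABq := hAB q hqt
    have hzhull : z ∈ convexHull ℝ (S : Set Pt) := hseghull p q hpS hqS hz
    have hmemE : (p, q) ∈ (c0, c) :: pathEdges (c :: t) :=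
      List.mem_cons_of_mem _ (pathEdges_subset c t (p, q) he)
    by_cases hpq : p = q
    · subst hpq
      rw [segment_same, Set.mem_singleton_iff] at hz
      subst hz
      exact ⟨fun h => hABp.2.1 h.1, fun h => hABp.1 h.1⟩
    rw [segment_eq_image] at hz
    obtain ⟨θ, hθ, hzeq⟩ := hz
    rw [Set.mem_Icc] at hθ
    rcases eq_or_lt_of_le hθ.1 with h0 | h0pos
    · have hzp : z = p := by rw [← hzeq, ← h0]; simp
      subst hzp
      exact ⟨fun h => hABp.2.1 h.1, fun h => hABp.1 h.1⟩
    rcases eq_or_lt_of_le hθ.2 with h1 | h1lt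
    · have hzq : z = q := by rw [← hzeq, h1]; simp
      subst hzq
      exact ⟨fun h => hABq.2.1 h.1, fun h => hABq.1 h.1⟩
    have hzopen : z ∈ openSegment ℝ p q := by
      rw [openSegment_eq_image]; exact ⟨θ, ⟨h0pos, h1lt⟩, hzeq⟩
    constructor
    · rintro ⟨hBz, hAz⟩
      have hz1 : z.1 = c0.1 + A z * (a.1 - c0.1) := by
        have h' := hre1 z; rw [hBz] at h'; linarith
      have hz2 : z.2 = c0.2 + A z * (a.2 - c0.2) := by
        have h' := hre2 z; rw [hBz] at h'; linarith
      rcases lt_trichotomy (A z) 1 with hA1 | hA1 | hA1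
      · rcases eq_or_lt_of_le hAz with hA0 | hA0
        · -- A z = 0 : z = c0 on the open segment : collinear
          have hzc0 : z = c0 := by
            refine Prod.ext ?_ ?_
            · rw [hz1, ← hA0]; ring
            · rw [hz2, ← hA0]; ring
          have hcoll : sign3 p q c0 = 0 := by
            rw [← hzc0, ← hzeq]; simp only [sign3, comb1, comb2]; ring
          exact hs3 p q c0 hpS hqS hc0S hpq hpc0 hqc0 hcoll
        · -- 0 < A z < 1 : z crosses the edge (a, c0)
          have hzmem : z ∈ openSegment ℝ c0 a := by
            rw [openSegment_eq_image]
            refine ⟨A z, ⟨hA0, hA1⟩, ?_⟩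
            refine Prod.ext ?_ ?_
            · rw [comb1, hz1]; ring
            · rw [comb2, hz2]; ring
          have hdisj := hNC1 (p, q) hmemE
          refine Set.eq_empty_iff_forall_notMem.1 hdisj z ⟨?_, hzopen⟩
          rw [openSegment_symm]; exact hzmem
      · -- A z = 1 : z = a on the open segment : collinear
        have hza : z = a := by
          refine Prod.ext ?_ ?_
          · rw [hz1, hA1]; ring
          · rw [hz2, hA1]; ring
        have hcoll : sign3 p q a = 0 := by
          rw [← hza, ← hzeq]; simp only [sign3, comb1, comb2]; ring
        exact hs3 p q a hpS hqS haS hpq hpa hqa hcoll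
      · -- A z > 1 : z is beyond a, outside the hull
        have hzb : z = c0 + A z • (a - c0) := by
          refine Prod.ext ?_ ?_
          · rw [hz1]; simp only [pt1_add, pt1_smul, pt1_sub]
          · rw [hz2]; simp only [pt2_add, pt2_smul, pt2_sub]
        exact beyond_not_mem hc0i (hnotint a haS hac0) hA1 (hzb ▸ hzhull)
    · rintro ⟨hAz, hBz⟩
      have hz1 : z.1 = c0.1 + B z * (c.1 - c0.1) := by
        have h' := hre1 z; rw [hAz] at h'; linarith
      have hz2 : z.2 = c0.2 + B z * (c.2 - c0.2) := by
        have h' := hre2 z; rw [hAz] at h'; linarith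
      rcases lt_trichotomy (B z) 1 with hB1 | hB1 | hB1
      · rcases eq_or_lt_of_le hBz with hB0 | hB0
        · have hzc0 : z = c0 := by
            refine Prod.ext ?_ ?_
            · rw [hz1, ← hB0]; ring
            · rw [hz2, ← hB0]; ring
          have hcoll : sign3 p q c0 = 0 := by
            rw [← hzc0, ← hzeq]; simp only [sign3, comb1, comb2]; ring
          exact hs3 p q c0 hpS hqS hc0S hpq hpc0 hqc0 hcoll
        · have hzmem : z ∈ openSegment ℝ c0 c := by
            rw [openSegment_eq_image]
            refine ⟨B z, ⟨hB0, hB1⟩, ?_⟩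
            refine Prod.ext ?_ ?_
            · rw [comb1, hz1]; ring
            · rw [comb2, hz2]; ring
          have hdisj := hNC2 (p, q) (pathEdges_subset c t (p, q) he)
          exact Set.eq_empty_iff_forall_notMem.1 hdisj z ⟨hzmem, hzopen⟩
      · have hzc : z = c := by
          refine Prod.ext ?_ ?_
          · rw [hz1, hB1]; ring
          · rw [hz2, hB1]; ring
        have hcoll : sign3 p q c = 0 := by
          rw [← hzc, ← hzeq]; simp only [sign3, comb1, comb2]; ring
        exact hs3 p q c hpS hqS hcS hpq hpc hqc hcoll
      · have hzb : z = c0 + B z • (c - c0) := by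
          refine Prod.ext ?_ ?_
          · rw [hz1]; simp only [pt1_add, pt1_smul, pt1_sub]
          · rw [hz2]; simp only [pt2_add, pt2_smul, pt2_sub]
        exact beyond_not_mem hc0i (hnotint c hcS (fun h => hc0c h.symm)) hB1 (hzb ▸ hzhull)
  -- wedge predicate
  set In : Pt → Prop := fun p => 0 < A p ∧ 0 < B p with hIn_def
  have hstep : ∀ p q : Pt, p ∈ t → q ∈ t →
      (∀ z ∈ segment ℝ p q, ¬(B z = 0 ∧ 0 ≤ A z) ∧ ¬(A z = 0 ∧ 0 ≤ B z)) →
      In p → ¬In q → False := by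
    intro p q hpt hqt hseg hInp hInq
    simp only [hIn_def] at hInp hInq
    have h1 : A q ≤ 0 ∨ B q ≤ 0 := by
      by_contra hc
      push_neg at hc
      exact hInq ⟨hc.1, hc.2⟩
    obtain ⟨θ, hθ0, hθ1, hor⟩ := seg_cross hInp.1 hInp.2 h1
    set z : Pt := (1-θ) • p + θ • q with hz_def
    have hzseg : z ∈ segment ℝ p q := by
      rw [segment_eq_image]; exact ⟨θ, Set.mem_Icc.2 ⟨hθ0, hθ1⟩, rfl⟩
    have hAz : A z = (1-θ) * A p + θ * A q := hAaff p q θ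
    have hBz : B z = (1-θ) * B p + θ * B q := hBaff p q θ
    rcases hor with ⟨hA0, hB0⟩ | ⟨hB0, hA0⟩
    · exact (hseg z hzseg).2 ⟨by rw [hAz]; exact hA0, by rw [hBz]; exact hB0⟩
    · exact (hseg z hzseg).1 ⟨by rw [hBz]; exact hB0, by rw [hAz]; exact hA0⟩
  have hchain : ∀ x ∈ t, ∀ y ∈ t, (In x ↔ In y) := by
    refine chain'_all (chain'_of_pathEdges t ?_)
    rintro ⟨p, q⟩ he
    obtain ⟨hpt, hqt'⟩ := pathEdges_mem he
    have hqt : q ∈ t := List.mem_of_mem_tail hqt'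
    constructor
    · intro hInp; by_contra hInq
      exact hstep p q hpt hqt (hray (p,q) he) hInp hInq
    · intro hInq; by_contra hInp
      refine hstep q p hqt hpt ?_ hInq hInp
      intro z hzs
      rw [segment_symm] at hzs
      exact hray (p,q) he z hzs
  by_cases hEx : ∃ p ∈ t, In p
  · -- all of t inside the wedge : c0 cannot be an interior point
    exfalso
    obtain ⟨p0, hp0, hIn0⟩ := hEx
    have hallIn : ∀ p ∈ t, In p := fun p hp => (hchain p0 hp0 p hp).1 hIn0
    have hLS : ∀ p ∈ S, 0 ≤ A p + B p := by
      intro p hp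
      rcases hmemS p hp with rfl | rfl | rfl | hpt
      · rw [hAa, hBa]; norm_num
      · rw [hAc0, hBc0]; norm_num
      · rw [hAc, hBc]; norm_num
      · have hIp := hallIn p hpt
        simp only [hIn_def] at hIp
        linarith [hIp.1, hIp.2]
    have hLaff : ∀ p q : Pt, ∀ θ : ℝ,
        (fun x => A x + B x) ((1-θ)•p + θ•q)
          = (1-θ) * ((fun x => A x + B x) p) + θ * ((fun x => A x + B x) q) := by
      intro p q θ
      simp only
      rw [hAaff, hBaff]; ring
    have h0 := interior_pos (fun x => A x + B x) hLaff
      (u := c0) (v := a)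
      (by rw [hAa, hBa, hAc0, hBc0]; norm_num) hLS hc0i
    simp only [hAc0, hBc0] at h0
    linarith
  push_neg at hEx
  have hLlt : ∀ p ∈ t, A p + B p < 1 := by
    intro p hp
    obtain ⟨hA0, hB0, hL1⟩ := hAB p hp
    have hnotIn := hEx p hp
    simp only [hIn_def] at hnotIn
    by_contra hge
    push_neg at hge
    have hgt : 1 < A p + B p := lt_of_le_of_ne hge (fun h => hL1 h.symm)
    have hcase : A p < 0 ∨ B p < 0 := by
      by_contra hc
      push_neg at hc
      exact hnotIn ⟨lt_of_le_of_ne hc.1 (Ne.symm hA0), lt_of_le_of_ne hc.2 (Ne.symm hB0)⟩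
    have hpS := htS p hp
    have hpc0 : p ≠ c0 := fun h => hc0t (h ▸ hp)
    have hpa : p ≠ a := fun h => hat (h ▸ hp)
    have hpc : p ≠ c := fun h => hct (h ▸ hp)
    have hc0ea : c0 ∈ ((S.erase a : Finset Pt) : Set Pt) :=
      Finset.mem_coe.2 (Finset.mem_erase.2 ⟨Ne.symm hac0, hc0S⟩)
    have hc0ec : c0 ∈ ((S.erase c : Finset Pt) : Set Pt) :=
      Finset.mem_coe.2 (Finset.mem_erase.2 ⟨fun h => hc0c h, hc0S⟩)
    rcases hcase with hA | hB
    · -- c would be inside conv {c0, a, p}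
      have hBgt : 1 < B p := by linarith
      have hBpos : 0 < B p := by linarith
      have hd : (0:ℝ) < B p - 1 := by linarith
      set w : Pt := ((A p + B p - 1)/(B p - 1)) • c0 + ((-(A p))/(B p - 1)) • a with hw_def
      have hae : a ∈ ((S.erase c : Finset Pt) : Set Pt) :=
        Finset.mem_coe.2 (Finset.mem_erase.2 ⟨hac, haS⟩)
      have hpe : p ∈ ((S.erase c : Finset Pt) : Set Pt) :=
        Finset.mem_coe.2 (Finset.mem_erase.2 ⟨hpc, hpS⟩)
      have hwmem : w ∈ convexHull ℝ ((S.erase c : Finset Pt) : Set Pt) := by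
        rw [hw_def]
        refine (convex_convexHull ℝ _) (subset_convexHull ℝ _ hc0ec)
          (subset_convexHull ℝ _ hae) ?_ ?_ ?_
        · exact div_nonneg (by linarith) (by linarith)
        · exact div_nonneg (by linarith) (by linarith)
        · rw [← add_div, show A p + B p - 1 + -(A p) = B p - 1 by ring]
          exact div_self (ne_of_gt hd)
      have hccomb : c = (1 - 1/(B p)) • w + (1/(B p)) • p := by
        rw [hw_def]
        have hp1 := hre1 p
        have hp2 := hre2 p
        refine Prod.ext ?_ ?_
        · simp only [pt1_add, pt1_smul]
          rw [hp1]
          field_simp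
          ring
        · simp only [pt2_add, pt2_smul]
          rw [hp2]
          field_simp
          ring
      have hm := (convex_convexHull ℝ ((S.erase c : Finset Pt) : Set Pt)) hwmem
        (subset_convexHull ℝ _ hpe)
        (show (0:ℝ) ≤ 1 - 1/(B p) by
          rw [sub_nonneg]; rw [div_le_one hBpos]; linarith)
        (show (0:ℝ) ≤ 1/(B p) from div_nonneg (by norm_num) (le_of_lt hBpos))
        (show (1 - 1/(B p)) + 1/(B p) = 1 by ring)
      rw [← hccomb] at hm
      exact (hext c hcS (fun h => hc0c h.symm)).2 hm
    · -- a would be inside conv {c0, c, p}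
      have hAgt : 1 < A p := by linarith
      have hApos : 0 < A p := by linarith
      have hd : (0:ℝ) < A p - 1 := by linarith
      set w : Pt := ((A p + B p - 1)/(A p - 1)) • c0 + ((-(B p))/(A p - 1)) • c with hw_def
      have hce : c ∈ ((S.erase a : Finset Pt) : Set Pt) :=
        Finset.mem_coe.2 (Finset.mem_erase.2 ⟨Ne.symm hac, hcS⟩)
      have hpe : p ∈ ((S.erase a : Finset Pt) : Set Pt) :=
        Finset.mem_coe.2 (Finset.mem_erase.2 ⟨hpa, hpS⟩)
      have hwmem : w ∈ convexHull ℝ ((S.erase a : Finset Pt) : Set Pt) := by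
        rw [hw_def]
        refine (convex_convexHull ℝ _) (subset_convexHull ℝ _ hc0ea)
          (subset_convexHull ℝ _ hce) ?_ ?_ ?_
        · exact div_nonneg (by linarith) (by linarith)
        · exact div_nonneg (by linarith) (by linarith)
        · rw [← add_div, show A p + B p - 1 + -(B p) = A p - 1 by ring]
          exact div_self (ne_of_gt hd)
      have hacomb : a = (1 - 1/(A p)) • w + (1/(A p)) • p := by
        rw [hw_def]
        have hp1 := hre1 p
        have hp2 := hre2 p
        refine Prod.ext ?_ ?_
        · simp only [pt1_add, pt1_smul]
          rw [hp1]
          field_simp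
          ring
        · simp only [pt2_add, pt2_smul]
          rw [hp2]
          field_simp
          ring
      have hm := (convex_convexHull ℝ ((S.erase a : Finset Pt) : Set Pt)) hwmem
        (subset_convexHull ℝ _ hpe)
        (show (0:ℝ) ≤ 1 - 1/(A p) by
          rw [sub_nonneg]; rw [div_le_one hApos]; linarith)
        (show (0:ℝ) ≤ 1/(A p) from div_nonneg (by norm_num) (le_of_lt hApos))
        (show (1 - 1/(A p)) + 1/(A p) = 1 by ring)
      rw [← hacomb] at hm
      exact (hext a haS hac0).2 hm
  -- halfplane function 1 - (A+B) vanishing on the line a-c, positive inside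
  have hf_aff : ∀ p q : Pt, ∀ θ : ℝ,
      (fun x => 1 - (A x + B x)) ((1-θ)•p + θ•q)
        = (1-θ) * ((fun x => 1 - (A x + B x)) p)
          + θ * ((fun x => 1 - (A x + B x)) q) := by
    intro p q θ
    simp only
    rw [hAaff, hBaff]; ring
  have hfS : ∀ p ∈ S, 0 ≤ (fun x => 1 - (A x + B x)) p := by
    intro p hp
    simp only
    rcases hmemS p hp with rfl | rfl | rfl | hpt
    · rw [hAa, hBa]; norm_num
    · rw [hAc0, hBc0]; norm_num
    · rw [hAc, hBc]; norm_num
    · have := hLlt p hpt; linarith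
  have hclosed : IsClosed (convexHull ℝ (S : Set Pt)) :=
    S.finite_toSet.isClosed_convexHull (𝕜 := ℝ)
  have hnotint_seg : ∀ x ∈ segment ℝ a c, x ∉ interior (convexHull ℝ (S : Set Pt)) := by
    intro x hx hxi
    have hfx0 : A x + B x = 1 := by
      rw [segment_eq_image] at hx
      obtain ⟨θ, hθ, hxeq⟩ := hx
      rw [← hxeq, hAaff, hBaff, hAa, hBa, hAc, hBc]; ring
    have hpos := interior_pos (fun x => 1 - (A x + B x)) hf_aff
      (u := a) (v := c0)
      (by rw [hAa, hBa, hAc0, hBc0]; norm_num) hfS hxi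
    linarith
  have hHull : HullEdge S a c := by
    refine ⟨haS, hcS, hac, ?_⟩
    intro x hx
    rw [hclosed.frontier_eq]
    exact ⟨hseghull a c haS hcS hx, hnotint_seg x hx⟩
  have hLopen : ∀ p q : Pt, A p + B p ≤ 1 → A q + B q ≤ 1 →
      (A p + B p < 1 ∨ A q + B q < 1) →
      ∀ z ∈ openSegment ℝ p q, A z + B z < 1 := by
    intro p q hp hq hpq z hz
    rw [openSegment_eq_image] at hz
    obtain ⟨θ, hθ, hzeq⟩ := hz
    obtain ⟨hθ0, hθ1⟩ := hθ
    rw [← hzeq, hAaff, hBaff]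
    rcases hpq with h | h
    · nlinarith
    · nlinarith
  have hac_open : ∀ z ∈ openSegment ℝ a c, A z + B z = 1 := by
    intro z hz
    rw [openSegment_eq_image] at hz
    obtain ⟨θ, hθ, hzeq⟩ := hz
    rw [← hzeq, hAaff, hBaff, hAa, hBa, hAc, hBc]; ring
  have hLmem : ∀ p, p ∈ (c :: t : List Pt) → A p + B p ≤ 1 := by
    intro p hp
    rcases List.mem_cons.1 hp with rfl | hpt
    · rw [hAc, hBc]; norm_num
    · exact le_of_lt (hLlt p hpt)
  have hedge_open : ∀ e ∈ pathEdges (c :: t), ∀ z ∈ openSegment ℝ e.1 e.2,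
      A z + B z < 1 := by
    rintro ⟨p, q⟩ he z hz
    obtain ⟨hp, hq'⟩ := pathEdges_mem he
    have hq : q ∈ t := hq'
    exact hLopen p q (hLmem p hp) (le_of_lt (hLlt q hq)) (Or.inr (hLlt q hq)) z hz
  -- edge set bookkeeping
  have hEnot : ∀ x y : Pt, x ∉ (c :: t : List Pt) → s(x, y) ∉ edgeSet (c :: t) := by
    intro x y hx hmem
    simp only [edgeSet, List.mem_toFinset, List.mem_map] at hmem
    obtain ⟨e, he, heq⟩ := hmem
    obtain ⟨h1', h2'⟩ := pathEdges_mem he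
    rcases Sym2.eq_iff.1 heq with ⟨hA', hB'⟩ | ⟨hA', hB'⟩
    · exact hx (hA' ▸ h1')
    · exact hx (hB' ▸ List.mem_cons_of_mem c h2')
  have hanotct : a ∉ (c :: t : List Pt) := by
    simp only [List.mem_cons, not_or]; exact ⟨hac, hat⟩
  have hc0notct : c0 ∉ (c :: t : List Pt) := by
    simp only [List.mem_cons, not_or]; exact ⟨fun h => hc0c h, hc0t⟩
  have hE1 : s(a, c0) ∉ edgeSet (c :: t) := hEnot a c0 hanotct
  have hE2 : s(c0, c) ∉ edgeSet (c :: t) := hEnot c0 c hc0notct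
  have hE3 : s(a, c) ∉ edgeSet (c :: t) := hEnot a c hanotct
  have hne12 : s(a, c0) ≠ s(c0, c) := by
    intro h
    rcases Sym2.eq_iff.1 h with ⟨h1, h2⟩ | ⟨h1, h2⟩
    · exact hac0 h1
    · exact hac h1
  have hQE : edgeSet (c0 :: a :: c :: t)
      = insert s(c0, a) (insert s(a, c) (edgeSet (c :: t))) := by
    simp [edgeSet, pathEdges_cons₂]
  have hPE2 : edgeSet (a :: c0 :: c :: t)
      = insert s(a, c0) (insert s(c0, c) (edgeSet (c :: t))) := by
    simp [edgeSet, pathEdges_cons₂]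
  refine ⟨hHull, c0 :: a :: c :: t, ⟨?_, ?_, ?_⟩, ?_, ?_⟩
  · -- Nodup
    simp only [List.nodup_cons, List.mem_cons, not_or]
    exact ⟨⟨fun h => hac0 h.symm, fun h => hc0c h, hc0t⟩, ⟨hac, hat⟩, hct, hndt⟩
  · -- toFinset
    rw [← hSP]
    simp only [List.toFinset_cons]
    rw [Finset.insert_comm]
  · -- NonCrossing
    show List.Pairwise _ ((c0, a) :: (a, c) :: pathEdges (c :: t))
    refine List.Pairwise.cons ?_ (List.Pairwise.cons ?_ hNCr)
    · intro e he
      rcases List.mem_cons.1 he with rfl | he'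
      · rw [Set.eq_empty_iff_forall_notMem]
        rintro z ⟨hz1, hz2⟩
        have h1 : A z + B z < 1 := hLopen c0 a (by rw [hAc0, hBc0]; norm_num)
          (by rw [hAa, hBa]; norm_num) (Or.inl (by rw [hAc0, hBc0]; norm_num)) z hz1
        have h2 := hac_open z hz2
        linarith
      · have hd := hNC1 e (List.mem_cons_of_mem _ he')
        rw [Set.eq_empty_iff_forall_notMem] at hd ⊢
        rintro z ⟨hz1, hz2⟩
        refine hd z ⟨?_, hz2⟩
        rw [openSegment_symm]
        exact hz1
    · intro e he
      rw [Set.eq_empty_iff_forall_notMem]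
      rintro z ⟨hz1, hz2⟩
      have h1 := hac_open z hz1
      have h2 := hedge_open e he z hz2
      linarith
  · -- edge set equation
    rw [hQE, hPE2, Finset.erase_insert_of_ne hne12, Finset.erase_insert hE2,
      show s(c0, a) = s(a, c0) from Sym2.eq_swap]
    exact Finset.insert_comm _ _ _
  · -- hull count
    have hnpred : ∀ u v : Pt, (u = c0 ∨ v = c0) →
        ¬(∃ u' v', s(u, v) = s(u', v') ∧ HullEdge S u' v') := by
      rintro u v hc0uv ⟨u', v', heq, hHE⟩
      have hor : c0 = u' ∨ c0 = v' := by
        rcases Sym2.eq_iff.1 heq with ⟨ha1, hb1⟩ | ⟨ha1, hb1⟩ <;>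
          rcases hc0uv with rfl | rfl <;>
          first
          | exact Or.inl ha1 | exact Or.inl ha1.symm
          | exact Or.inr hb1 | exact Or.inr hb1.symm
          | exact Or.inl hb1 | exact Or.inl hb1.symm
          | exact Or.inr ha1 | exact Or.inr ha1.symm
      have hc0mem : c0 ∈ segment ℝ u' v' := by
        rcases hor with h | h
        · rw [h]; exact left_mem_segment ℝ u' v'
        · rw [h]; exact right_mem_segment ℝ u' v'
      have hfr := hHE.2.2.2 hc0mem
      rw [hclosed.frontier_eq] at hfr
      exact hfr.2 hc0i
    simp only [hullCount]
    rw [hQE, hPE2]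
    rw [Finset.filter_insert, if_neg (hnpred c0 a (Or.inl rfl)),
      Finset.filter_insert, if_pos ⟨a, c, rfl, hHull⟩,
      Finset.filter_insert, if_neg (hnpred a c0 (Or.inr rfl)),
      Finset.filter_insert, if_neg (hnpred c0 c (Or.inl rfl))]
    rw [Finset.card_insert_of_notMem]
    intro hmem
    exact hE3 (Finset.mem_filter.1 hmem).1
end
end

section
/- Let S be a wheel set of n points (exactly one interior point c0), and let P = v1,...,vn be a plane spanning path on S such that v_i v_{i+1} is an inner edge (neither a hull edge nor incident to c0). Then the point sets {v1,...,v_{i-1}} and {v_{i+2},...,vn} lie strictly on opposite sides of the line through v_i and v_{i+1}. -/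
open scoped Classical

noncomputable section

lemma sign3_affine (a b p q : Pt) (t : ℝ) :
    sign3 a b ((1-t) • p + t • q) = (1-t) * sign3 a b p + t * sign3 a b q := by
  simp only [sign3, Prod.fst_add, Prod.snd_add, Prod.smul_fst, Prod.smul_snd, smul_eq_mul]
  ring

lemma sign3_self_left (a b : Pt) : sign3 a b a = 0 := by simp [sign3]
lemma sign3_self_right (a b : Pt) : sign3 a b b = 0 := by simp [sign3]; ring

lemma exists_param {a b x : Pt} (hab : a ≠ b) (h : sign3 a b x = 0) :
    ∃ s : ℝ, x = (1-s) • a + s • b := by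
  have hab' : b.1 - a.1 ≠ 0 ∨ b.2 - a.2 ≠ 0 := by
    by_contra hc
    push_neg at hc
    exact hab (Prod.ext (by linarith [hc.1]) (by linarith [hc.2])).symm
  simp only [sign3, sub_eq_zero] at h
  rcases hab' with h1 | h2
  · refine ⟨(x.1 - a.1) / (b.1 - a.1), Prod.ext ?_ ?_⟩ <;>
      simp only [Prod.fst_add, Prod.snd_add, Prod.smul_fst, Prod.smul_snd, smul_eq_mul] <;>
      field_simp <;> ring_nf <;> nlinarith [h]
  · refine ⟨(x.2 - a.2) / (b.2 - a.2), Prod.ext ?_ ?_⟩ <;>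
      simp only [Prod.fst_add, Prod.snd_add, Prod.smul_fst, Prod.smul_snd, smul_eq_mul] <;>
      field_simp <;> ring_nf <;> nlinarith [h]

lemma collinear_of_sign3_eq_zero {a b p : Pt} (h : sign3 a b p = 0) :
    Collinear ℝ ({a, b, p} : Set Pt) := by
  by_cases hab : a = b
  · subst hab
    have : ({a, a, p} : Set Pt) = {a, p} := by simp
    rw [this]; exact collinear_pair ℝ a p
  · obtain ⟨s, hs⟩ := exists_param hab h
    rw [collinear_iff_of_mem (Set.mem_insert a _)]
    refine ⟨b - a, ?_⟩
    rintro x (rfl | rfl | rfl)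
    · exact ⟨0, by simp⟩
    · exact ⟨1, by simp⟩
    · refine ⟨s, ?_⟩
      rw [hs]
      simp only [vadd_eq_add, smul_sub]
      module

lemma sign3_ne_zero {S : Finset Pt} (hG : GenPos S) {a b p : Pt}
    (ha : a ∈ S) (hb : b ∈ S) (hp : p ∈ S) (hab : a ≠ b) (hap : a ≠ p) (hbp : b ≠ p) :
    sign3 a b p ≠ 0 :=
  fun h => hG a ha b hb p hp hab hap hbp (collinear_of_sign3_eq_zero h)

lemma sign3_eq_zero_of_mem_openSegment {p q x : Pt} (hx : x ∈ openSegment ℝ p q) :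
    sign3 p q x = 0 := by
  obtain ⟨c, d, hc, hd, hcd, rfl⟩ := hx
  have hc1 : c = 1 - d := by linarith
  subst hc1
  rw [sign3_affine, sign3_self_left, sign3_self_right]
  ring

lemma convex_sign3_le (a b : Pt) : Convex ℝ {p : Pt | sign3 a b p ≤ 0} := by
  intro x hx y hy c d hc hd hcd
  have hc1 : c = 1 - d := by linarith
  subst hc1
  simp only [Set.mem_setOf_eq] at *
  rw [sign3_affine]
  nlinarith

lemma sign3_segment_zero {a b x : Pt} (hx : x ∈ segment ℝ a b) : sign3 a b x = 0 := by
  obtain ⟨c, d, hc, hd, hcd, rfl⟩ := hx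
  have hc1 : c = 1 - d := by linarith
  subst hc1
  rw [sign3_affine, sign3_self_left, sign3_self_right]; ring

lemma hullEdge_of_oneSide {S : Finset Pt} {a b : Pt} (haS : a ∈ S) (hbS : b ∈ S)
    (hab : a ≠ b) (hle : ∀ p ∈ S, sign3 a b p ≤ 0) : HullEdge S a b := by
  refine ⟨haS, hbS, hab, fun x hx => ?_⟩
  have hhull : convexHull ℝ (S : Set Pt) ⊆ {p : Pt | sign3 a b p ≤ 0} :=
    convexHull_min (fun p hp => hle p hp) (convex_sign3_le a b)
  have hxh : x ∈ convexHull ℝ (S : Set Pt) :=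
    (convex_convexHull ℝ _).segment_subset (subset_convexHull ℝ _ haS)
      (subset_convexHull ℝ _ hbS) hx
  have hclosed : IsClosed (convexHull ℝ (S : Set Pt)) :=
    (S.finite_toSet).isClosed_convexHull (𝕜 := ℝ)
  rw [frontier, hclosed.closure_eq]
  refine ⟨hxh, fun hint => ?_⟩
  -- push in the normal direction
  set n : Pt := (-(b.2 - a.2), b.1 - a.1) with hn
  have hcont : Continuous fun t : ℝ => x + t • n := by continuity
  have h0 : (fun t : ℝ => x + t • n) 0 ∈ interior (convexHull ℝ (S : Set Pt)) := by
    simpa using hint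
  have hev : ∀ᶠ t in nhds (0 : ℝ), x + t • n ∈ interior (convexHull ℝ (S : Set Pt)) :=
    hcont.continuousAt.eventually_mem (isOpen_interior.mem_nhds h0)
  have hev' : ∀ᶠ t in nhdsWithin (0 : ℝ) (Set.Ioi 0),
      x + t • n ∈ interior (convexHull ℝ (S : Set Pt)) :=
    hev.filter_mono nhdsWithin_le_nhds
  obtain ⟨t, htmem, ht0⟩ := (hev'.and self_mem_nhdsWithin).exists
  have htS : sign3 a b (x + t • n) ≤ 0 := hhull (interior_subset htmem)
  have hx0 : sign3 a b x = 0 := sign3_segment_zero hx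
  have hpos : (0:ℝ) < (b.1 - a.1)^2 + (b.2 - a.2)^2 := by
    rcases (by
      by_contra hc
      push_neg at hc
      exact hab (Prod.ext (by linarith [hc.1]) (by linarith [hc.2])).symm :
      b.1 - a.1 ≠ 0 ∨ b.2 - a.2 ≠ 0) with h | h <;> positivity
  have hcomp : sign3 a b (x + t • n) = sign3 a b x + t * ((b.1 - a.1)^2 + (b.2 - a.2)^2) := by
    simp only [sign3, hn, Prod.fst_add, Prod.snd_add, Prod.smul_fst, Prod.smul_snd, smul_eq_mul]
    ring
  rw [hcomp, hx0, zero_add] at htS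
  have : (0:ℝ) < t * ((b.1 - a.1)^2 + (b.2 - a.2)^2) := mul_pos (Set.mem_Ioi.mp ht0) hpos
  linarith

lemma cross_of_opposite {S : Finset Pt} (hG : GenPos S) {a b p q : Pt}
    (haS : a ∈ S) (hbS : b ∈ S) (hpS : p ∈ S) (hqS : q ∈ S)
    (hab : a ≠ b) (hpa : p ≠ a) (hpb : p ≠ b) (hqa : q ≠ a) (hqb : q ≠ b)
    (hEa : ExtremePt S a) (hEb : ExtremePt S b)
    (hp : sign3 a b p < 0) (hq : 0 < sign3 a b q) :
    (openSegment ℝ p q ∩ openSegment ℝ a b).Nonempty := by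
  have hpq : p ≠ q := fun h => by rw [h] at hp; linarith
  set fp := sign3 a b p with hfp
  set fq := sign3 a b q with hfq
  have hd : fp - fq < 0 := by linarith
  have hdne : fp - fq ≠ 0 := ne_of_lt hd
  set t : ℝ := fp / (fp - fq) with ht
  have ht0 : 0 < t := div_pos_of_neg_of_neg hp hd
  have ht1 : t < 1 := (div_lt_one_of_neg hd).mpr (by linarith)
  set x : Pt := (1-t) • p + t • q with hx
  have hxseg : x ∈ openSegment ℝ p q := by
    refine ⟨1-t, t, ?_, ht0, ?_, rfl⟩
    · linarith
    · ring
  have hx0 : sign3 a b x = 0 := by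
    rw [hx, sign3_affine, ← hfp, ← hfq, ht]
    field_simp
    ring
  obtain ⟨s, hs⟩ := exists_param hab hx0
  have hxha : x ∈ convexHull ℝ ((S.erase a : Finset Pt) : Set Pt) :=
    segment_subset_convexHull
      (Finset.mem_coe.mpr (Finset.mem_erase.mpr ⟨hpa, hpS⟩))
      (Finset.mem_coe.mpr (Finset.mem_erase.mpr ⟨hqa, hqS⟩))
      (openSegment_subset_segment ℝ p q hxseg)
  have hxhb : x ∈ convexHull ℝ ((S.erase b : Finset Pt) : Set Pt) :=
    segment_subset_convexHull
      (Finset.mem_coe.mpr (Finset.mem_erase.mpr ⟨hpb, hpS⟩))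
      (Finset.mem_coe.mpr (Finset.mem_erase.mpr ⟨hqb, hqS⟩))
      (openSegment_subset_segment ℝ p q hxseg)
  rcases lt_trichotomy s 0 with hs0 | hs0 | hs0
  · exfalso
    have h1s : (0:ℝ) < 1 - s := by linarith
    have hbh : b ∈ convexHull ℝ ((S.erase a : Finset Pt) : Set Pt) :=
      subset_convexHull ℝ _ (Finset.mem_coe.mpr (Finset.mem_erase.mpr ⟨hab.symm, hbS⟩))
    have hcomb : a = (1/(1-s)) • x + (-s/(1-s)) • b := by
      rw [hs]
      match_scalars <;> field_simp <;> ring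
    have hmem : (1/(1-s)) • x + (-s/(1-s)) • b ∈
        convexHull ℝ ((S.erase a : Finset Pt) : Set Pt) :=
      (convex_convexHull ℝ _) hxha hbh
        (le_of_lt (by positivity))
        (div_nonneg (by linarith) (by linarith))
        (by field_simp; ring)
    rw [← hcomb] at hmem
    exact hEa.2 hmem
  · exfalso
    have hxa : x = a := by rw [hs, hs0]; simp
    have hz : sign3 p q a = 0 := by
      rw [← hxa]; exact sign3_eq_zero_of_mem_openSegment hxseg
    exact hG p hpS q hqS a haS hpq hpa hqa (collinear_of_sign3_eq_zero hz)
  · rcases lt_trichotomy s 1 with hs1 | hs1 | hs1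
    · exact ⟨x, hxseg, ⟨1-s, s, by linarith, hs0, by ring, hs.symm⟩⟩
    · exfalso
      have hxb : x = b := by rw [hs, hs1]; simp
      have hz : sign3 p q b = 0 := by
        rw [← hxb]; exact sign3_eq_zero_of_mem_openSegment hxseg
      exact hG p hpS q hqS b hbS hpq hpb hqb (collinear_of_sign3_eq_zero hz)
    · exfalso
      have hspos : (0:ℝ) < s := hs0
      have hah : a ∈ convexHull ℝ ((S.erase b : Finset Pt) : Set Pt) :=
        subset_convexHull ℝ _ (Finset.mem_coe.mpr (Finset.mem_erase.mpr ⟨hab, haS⟩))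
      have hcomb : b = (1/s) • x + ((s-1)/s) • a := by
        rw [hs]
        match_scalars <;> field_simp <;> ring
      have hmem : (1/s) • x + ((s-1)/s) • a ∈
          convexHull ℝ ((S.erase b : Finset Pt) : Set Pt) :=
        (convex_convexHull ℝ _) hxhb hah
          (le_of_lt (div_pos one_pos hspos))
          (div_nonneg (by linarith) (by linarith))
          (by field_simp; ring)
      rw [← hcomb] at hmem
      exact hEb.2 hmem

lemma sign3_swap (a b p : Pt) : sign3 b a p = - sign3 a b p := by
  simp only [sign3]; ring

/-- In a wheel set, if `v_i v_{i+1}` is an inner edge of a plane spanning path,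
then the preceding vertices and the following vertices of the path lie strictly
on opposite sides of the line through `v_i` and `v_{i+1}`. -/
theorem stmt_14 (S : Finset Pt) (c0 : Pt) (hW : WheelSet S c0)
    (P : List Pt) (hP : IsPlanePath S P)
    (i : ℕ) (hi : i + 1 < P.length)
    (ha : ExtremePt S (P.getD i pd)) (hb : ExtremePt S (P.getD (i + 1) pd))
    (hinner : ¬ HullEdge S (P.getD i pd) (P.getD (i + 1) pd)) :
    ((∀ j < i, sign3 (P.getD i pd) (P.getD (i + 1) pd) (P.getD j pd) < 0) ∧
     (∀ k, i + 1 < k → k < P.length →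
        0 < sign3 (P.getD i pd) (P.getD (i + 1) pd) (P.getD k pd))) ∨
    ((∀ j < i, 0 < sign3 (P.getD i pd) (P.getD (i + 1) pd) (P.getD j pd)) ∧
     (∀ k, i + 1 < k → k < P.length →
        sign3 (P.getD i pd) (P.getD (i + 1) pd) (P.getD k pd) < 0)) := by
  obtain ⟨hnd, hts, hnc⟩ := hP
  have hG : GenPos S := hW.1
  set a : Pt := P.getD i pd with hadef
  set b : Pt := P.getD (i+1) pd with hbdef
  -- basic index facts
  have hv : ∀ j (h : j < P.length), P.getD j pd = P[j] := fun j h => List.getD_eq_getElem P pd h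
  have hmem : ∀ j, j < P.length → P.getD j pd ∈ S := by
    intro j h
    rw [hv j h, ← hts, List.mem_toFinset]
    exact List.getElem_mem h
  have hinj : ∀ j k, j < P.length → k < P.length → j ≠ k → P.getD j pd ≠ P.getD k pd := by
    intro j k hj hk hjk
    rw [hv j hj, hv k hk]
    exact fun h => hjk ((hnd.getElem_inj_iff).mp h)
  have haS : a ∈ S := hmem i (by omega)
  have hbS : b ∈ S := hmem (i+1) hi
  have hab : a ≠ b := hinj i (i+1) (by omega) hi (by omega)
  -- nonvanishing of sign3 off the special indices
  have hnz : ∀ j, j < P.length → j ≠ i → j ≠ i+1 → sign3 a b (P.getD j pd) ≠ 0 := by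
    intro j hj hji hji1
    exact sign3_ne_zero hG haS hbS (hmem j hj) hab
      (hinj i j (by omega) hj (fun h => hji h.symm))
      (hinj (i+1) j hi hj (fun h => hji1 h.symm))
  -- pathEdges facts
  have hPElen : (pathEdges P).length = P.length - 1 := by
    simp [pathEdges]
  have hedge : ∀ j (h : j + 1 < P.length),
      (pathEdges P)[j]'(by rw [hPElen]; omega) = (P.getD j pd, P.getD (j+1) pd) := by
    intro j h
    simp only [pathEdges, List.getElem_zip, List.getElem_tail]
    rw [hv j (by omega), hv (j+1) h]
  -- disjointness of each non-special edge with the special edge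
  have hdisj : ∀ j, j + 1 < P.length → j ≠ i →
      openSegment ℝ (P.getD j pd) (P.getD (j+1) pd) ∩ openSegment ℝ a b = ∅ := by
    intro j hj hne
    have hpw := List.pairwise_iff_getElem.mp hnc
    rcases lt_or_gt_of_ne hne with h | h
    · have := hpw j i (by rw [hPElen]; omega) (by rw [hPElen]; omega) h
      rw [hedge j hj, hedge i hi] at this
      exact this
    · have := hpw i j (by rw [hPElen]; omega) (by rw [hPElen]; omega) h
      rw [hedge j hj, hedge i hi] at this
      rw [Set.inter_comm]
      exact this
  -- sign agreement along one edge
  have hstep : ∀ j, j + 1 < P.length → (j + 1 < i ∨ i + 1 < j) →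
      (0 < sign3 a b (P.getD j pd) ↔ 0 < sign3 a b (P.getD (j+1) pd)) := by
    intro j hj hcase
    have hji : j ≠ i := by omega
    have hji1 : j ≠ i + 1 := by omega
    have h1i : j + 1 ≠ i := by omega
    have h1i1 : j + 1 ≠ i + 1 := by omega
    have hz1 := hnz j (by omega) hji hji1
    have hz2 := hnz (j+1) hj h1i h1i1
    have hdj := hdisj j hj hji
    constructor
    · intro hpos
      rcases lt_trichotomy (sign3 a b (P.getD (j+1) pd)) 0 with hlt | h0 | hgt
      · exfalso
        obtain ⟨x, hx1, hx2⟩ := cross_of_opposite hG haS hbS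
          (hmem (j+1) hj) (hmem j (by omega)) hab
          (hinj (j+1) i hj (by omega) h1i) (hinj (j+1) (i+1) hj hi h1i1)
          (hinj j i (by omega) (by omega) hji) (hinj j (i+1) (by omega) hi hji1)
          ha hb hlt hpos
        rw [openSegment_symm] at hx1
        exact Set.eq_empty_iff_forall_notMem.mp hdj x ⟨hx1, hx2⟩
      · exact absurd h0 hz2
      · exact hgt
    · intro hpos
      rcases lt_trichotomy (sign3 a b (P.getD j pd)) 0 with hlt | h0 | hgt
      · exfalso
        obtain ⟨x, hx1, hx2⟩ := cross_of_opposite hG haS hbS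
          (hmem j (by omega)) (hmem (j+1) hj) hab
          (hinj j i (by omega) (by omega) hji) (hinj j (i+1) (by omega) hi hji1)
          (hinj (j+1) i hj (by omega) h1i) (hinj (j+1) (i+1) hj hi h1i1)
          ha hb hlt hpos
        exact Set.eq_empty_iff_forall_notMem.mp hdj x ⟨hx1, hx2⟩
      · exact absurd h0 hz1
      · exact hgt
  -- prefix constancy
  have hpre : ∀ j k, j ≤ k → k < i →
      (0 < sign3 a b (P.getD j pd) ↔ 0 < sign3 a b (P.getD k pd)) := by
    intro j k hjk hk
    induction k, hjk using Nat.le_induction with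
    | base => rfl
    | succ m hm ih =>
      have hmi : m < i := by omega
      rw [ih hmi]
      exact hstep m (by omega) (Or.inl (by omega))
  -- suffix constancy
  have hsuf : ∀ k l, i + 1 < k → k ≤ l → l < P.length →
      (0 < sign3 a b (P.getD k pd) ↔ 0 < sign3 a b (P.getD l pd)) := by
    intro k l hk hkl hl
    induction l, hkl using Nat.le_induction with
    | base => rfl
    | succ m hm ih =>
      rw [ih (by omega)]
      exact hstep m (by omega) (Or.inr (by omega))
  -- every point of S is some P.getD
  have hrep : ∀ p ∈ S, ∃ j, j < P.length ∧ P.getD j pd = p := by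
    intro p hp
    rw [← hts, List.mem_toFinset, List.mem_iff_getElem] at hp
    obtain ⟨j, hj, hjp⟩ := hp
    exact ⟨j, hj, by rw [hv j hj]; exact hjp⟩
  -- if all points were on one weak side, the edge would be a hull edge
  have hbothsides : (∃ j, j < P.length ∧ (j < i ∨ i + 1 < j) ∧ 0 < sign3 a b (P.getD j pd)) ∧
      (∃ j, j < P.length ∧ (j < i ∨ i + 1 < j) ∧ sign3 a b (P.getD j pd) < 0) := by
    constructor
    · by_contra hcon
      push_neg at hcon
      apply hinner
      apply hullEdge_of_oneSide haS hbS hab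
      intro p hp
      obtain ⟨j, hj, rfl⟩ := hrep p hp
      rcases eq_or_ne j i with rfl | hji
      · rw [← hadef, sign3_self_left]
      rcases eq_or_ne j (i+1) with rfl | hji1
      · rw [← hbdef, sign3_self_right]
      have := hcon j hj (by omega)
      linarith
    · by_contra hcon
      push_neg at hcon
      apply hinner
      have hBA : HullEdge S b a := by
        apply hullEdge_of_oneSide hbS haS hab.symm
        intro p hp
        rw [sign3_swap]
        obtain ⟨j, hj, rfl⟩ := hrep p hp
        rcases eq_or_ne j i with rfl | hji
        · rw [← hadef, sign3_self_left]; norm_num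
        rcases eq_or_ne j (i+1) with rfl | hji1
        · rw [← hbdef, sign3_self_right]; norm_num
        have := hcon j hj (by omega)
        linarith
      exact ⟨haS, hbS, hab, by rw [segment_symm]; exact hBA.2.2.2⟩
  obtain ⟨⟨jp, hjp, hjpc, hjppos⟩, ⟨jn, hjn, hjnc, hjnneg⟩⟩ := hbothsides
  -- helper: signs constant on prefix / on suffix
  have hprefix_iff : ∀ j k, j < i → k < i →
      (0 < sign3 a b (P.getD j pd) ↔ 0 < sign3 a b (P.getD k pd)) := by
    intro j k hj hk
    rcases le_total j k with h | h
    · exact hpre j k h hk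
    · exact (hpre k j h hj).symm
  have hsuffix_iff : ∀ j k, i + 1 < j → j < P.length → i + 1 < k → k < P.length →
      (0 < sign3 a b (P.getD j pd) ↔ 0 < sign3 a b (P.getD k pd)) := by
    intro j k hj hjl hk hkl
    rcases le_total j k with h | h
    · exact hsuf j k hj h hkl
    · exact (hsuf k j hk h hjl).symm
  have hneg_of_not_pos : ∀ j, j < P.length → (j < i ∨ i + 1 < j) →
      ¬ (0 < sign3 a b (P.getD j pd)) → sign3 a b (P.getD j pd) < 0 := by
    intro j hj hc hnp
    have := hnz j hj (by omega) (by omega)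
    rcases lt_trichotomy (sign3 a b (P.getD j pd)) 0 with h | h | h
    · exact h
    · exact absurd h this
    · exact absurd h hnp
  rcases hjpc with hjpL | hjpR <;> rcases hjnc with hjnL | hjnR
  · exact absurd ((hprefix_iff jn jp hjnL hjpL).mpr hjppos) (by linarith)
  · -- positive in prefix, negative in suffix
    right
    constructor
    · intro j hj
      exact (hprefix_iff j jp hj hjpL).mpr hjppos
    · intro k hk hkl
      apply hneg_of_not_pos k hkl (Or.inr hk)
      intro hpos
      have := (hsuffix_iff k jn hk hkl hjnR hjn).mp hpos
      linarith
  · -- negative in prefix, positive in suffix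
    left
    constructor
    · intro j hj
      apply hneg_of_not_pos j (by omega) (Or.inl hj)
      intro hpos
      have := (hprefix_iff j jn hj hjnL).mp hpos
      linarith
    · intro k hk hkl
      exact (hsuffix_iff k jp hk hkl hjpR hjp).mpr hjppos
  · exact absurd ((hsuffix_iff jn jp hjnR hjn hjpR hjp).mpr hjppos) (by linarith)
end
end
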